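/- arXiv:2601.22370 — 7 statements merged into one kernel-verified Lean document; each statement's English description precedes it below -/
import Mathlib

section
/- Let f : ℝⁿ → ℝ be convex, t > 0, δ > 0, x ∈ ℝⁿ, and let Z be a random vector whose law has density proportional to exp(−(f(z) + ‖z − x‖²/(2t))/δ) with respect to Lebesgue measure (assumed normalizable). Then E[‖Z − prox_{tf}(x)‖²] ≤ n t δ. -/
open MeasureTheory Real
open scoped ENNReal NNReal

lemma combo_norm_sq {E : Type*} [NormedAddCommGroup E] [InnerProductSpace ℝ E]
    (a b : ℝ) (h : a + b = 1) (u v : E) :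
    ‖a • u + b • v‖ ^ 2 = a * ‖u‖ ^ 2 + b * ‖v‖ ^ 2 - a * b * ‖u - v‖ ^ 2 := by
  have hb : b = 1 - a := by linarith
  subst hb
  simp only [← real_inner_self_eq_norm_sq, inner_add_left, inner_add_right,
    inner_sub_left, inner_sub_right, real_inner_smul_left, real_inner_smul_right,
    real_inner_comm u v]
  ring

lemma le_of_forall_mul_lt {r W : ℝ} (h : ∀ l : ℝ, 0 < l → l < 1 → (1 - l) * r ≤ W) :
    r ≤ W := by
  by_contra h'
  push_neg at h'
  have h2 := h (1/2) (by norm_num) (by norm_num)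
  have hr : 0 < r := by nlinarith
  have hl1 : 0 < (r - W) / (2 * r) := div_pos (by linarith) (by linarith)
  have hl2 : (r - W) / (2 * r) < 1 := by
    rw [div_lt_one (by linarith)]; nlinarith
  have h3 := h _ hl1 hl2
  have hkey : (r - W) / (2 * r) * r = (r - W) / 2 := by
    field_simp
  nlinarith [h3, hkey]

/-- **Second moment bound for the Gibbs measure of the proximal objective.**
If `Z` has density proportional to `exp(−(f(z) + ‖z − x‖²/(2t))/δ)`, then
`E[‖Z − prox_{tf}(x)‖²] ≤ n t δ`. -/
theorem gibbs_second_moment_bound (n : ℕ) (f : EuclideanSpace ℝ (Fin n) → ℝ)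
    (hf : ConvexOn ℝ Set.univ f) (t δ : ℝ) (ht : 0 < t) (hδ : 0 < δ)
    (x p : EuclideanSpace ℝ (Fin n))
    (hp : IsMinOn (fun z => f z + ‖z - x‖ ^ 2 / (2 * t)) Set.univ p)
    (c : ℝ) (hc : 0 < c)
    (μ : Measure (EuclideanSpace ℝ (Fin n)))
    (hμ : μ = volume.withDensity fun z =>
      ENNReal.ofReal (c * Real.exp (-(f z + ‖z - x‖ ^ 2 / (2 * t)) / δ)))
    (hprob : IsProbabilityMeasure μ) :
    ∫⁻ z, ENNReal.ofReal (‖z - p‖ ^ 2) ∂μ ≤ ENNReal.ofReal (n * t * δ) := by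
  set g : EuclideanSpace ℝ (Fin n) → ℝ := fun z => f z + ‖z - x‖ ^ 2 / (2 * t) with hgdef
  -- continuity of f and g
  have hfc : Continuous f := by
    rw [← continuousOn_univ]
    exact hf.continuousOn isOpen_univ
  have hgc : Continuous g := by
    apply hfc.add
    exact ((continuous_id.sub continuous_const).norm.pow 2).div_const _
  -- convex combination inequality
  have hcomb : ∀ l : ℝ, 0 < l → l < 1 → ∀ z,
      g ((1 - l) • p + l • z) ≤ (1 - l) * g p + l * g z - l * (1 - l) * ‖z - p‖ ^ 2 / (2 * t) := by
    intro l hl0 hl1 z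
    have hconv := hf.2 (Set.mem_univ p) (Set.mem_univ z) (by linarith : (0:ℝ) ≤ 1 - l)
      (le_of_lt hl0) (by ring)
    have he : (1 - l) • (p - x) + l • (z - x) = (1 - l) • p + l • z - x := by
      module
    have hq : ‖(1 - l) • p + l • z - x‖ ^ 2
        = (1 - l) * ‖p - x‖ ^ 2 + l * ‖z - x‖ ^ 2 - (1 - l) * l * ‖z - p‖ ^ 2 := by
      rw [← he, combo_norm_sq (1 - l) l (by ring) (p - x) (z - x)]
      have : p - x - (z - x) = p - z := by abel
      rw [this, norm_sub_rev p z]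
    simp only [hgdef, smul_eq_mul] at hconv ⊢
    rw [hq]
    have expand : ((1 - l) * ‖p - x‖ ^ 2 + l * ‖z - x‖ ^ 2 - (1 - l) * l * ‖z - p‖ ^ 2) / (2 * t)
        = (1 - l) * (‖p - x‖ ^ 2 / (2 * t)) + l * (‖z - x‖ ^ 2 / (2 * t))
          - l * (1 - l) * ‖z - p‖ ^ 2 / (2 * t) := by ring
    rw [expand]
    ring_nf
    ring_nf at hconv
    linarith
  -- strong convexity at the minimizer
  have hstrong : ∀ z, g p + ‖z - p‖ ^ 2 / (2 * t) ≤ g z := by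
    intro z
    have key : ‖z - p‖ ^ 2 / (2 * t) ≤ g z - g p := by
      apply le_of_forall_mul_lt
      intro l hl0 hl1
      have h1 := hcomb l hl0 hl1 z
      have h2 : g p ≤ g ((1 - l) • p + l • z) := isMinOn_iff.mp hp _ (Set.mem_univ _)
      have h3 : l * ((1 - l) * (‖z - p‖ ^ 2 / (2 * t))) ≤ l * (g z - g p) := by
        ring_nf at h1 h2 ⊢
        linarith [h1, h2]
      have h4 := (mul_le_mul_iff_right₀ hl0).mp h3
      linarith
    linarith
  -- key scaling inequality
  have hkey : ∀ l : ℝ, 0 < l → l < 1 → ∀ u,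
      g (p + l • u) ≤ g (p + u) - (1 - l ^ 2) * ‖u‖ ^ 2 / (2 * t) := by
    intro l hl0 hl1 u
    have hco : (1 - l) • p + l • (p + u) = p + l • u := by module
    have h1 := hcomb l hl0 hl1 (p + u)
    rw [hco] at h1
    have hnu : p + u - p = u := by abel
    rw [hnu] at h1
    have h2 := hstrong (p + u)
    rw [hnu] at h2
    have hh : (0:ℝ) ≤ (1 - l) * (g (p + u) - g p - ‖u‖ ^ 2 / (2 * t)) :=
      mul_nonneg (by linarith) (by linarith)
    have hexp : (1 - l) * (g (p + u) - g p - ‖u‖ ^ 2 / (2 * t))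
        = g (p + u) - l * g (p + u) - (1 - l) * g p - (1 - l) * ‖u‖ ^ 2 / (2 * t) := by
      ring
    rw [hexp] at hh
    have hsum : l * (1 - l) * ‖u‖ ^ 2 / (2 * t) + (1 - l) * ‖u‖ ^ 2 / (2 * t)
        = (1 - l ^ 2) * ‖u‖ ^ 2 / (2 * t) := by ring
    linarith
  -- density function
  set D : EuclideanSpace ℝ (Fin n) → ℝ≥0∞ :=
    fun z => ENNReal.ofReal (c * Real.exp (-(g z) / δ)) with hDdef
  have hμ' : μ = volume.withDensity D := hμ
  have hDc : Continuous D :=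
    ENNReal.continuous_ofReal.comp
      (continuous_const.mul (Real.continuous_exp.comp ((hgc.neg).div_const δ)))
  have hD : Measurable D := hDc.measurable
  have hDp : Measurable fun u => D (p + u) := hD.comp (measurable_id.const_add p)
  have hone : ∫⁻ z, D z = 1 := by
    have h := hprob.measure_univ
    rw [hμ', withDensity_apply _ MeasurableSet.univ, setLIntegral_univ] at h
    exact h
  have htrans : ∫⁻ u, D (p + u) = 1 := (lintegral_add_left_eq_self D p).trans hone
  have hnormsq : Measurable fun z : EuclideanSpace ℝ (Fin n) => ENNReal.ofReal (‖z - p‖ ^ 2) :=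
    (ENNReal.continuous_ofReal.comp
      (((continuous_id.sub continuous_const).norm.pow 2))).measurable
  have hT : ∫⁻ z, ENNReal.ofReal (‖z - p‖ ^ 2) ∂μ
      = ∫⁻ u, D (p + u) * ENNReal.ofReal (‖u‖ ^ 2) := by
    rw [hμ', lintegral_withDensity_eq_lintegral_mul volume hD hnormsq]
    rw [← lintegral_add_left_eq_self
      (fun z => (D * fun z => ENNReal.ofReal (‖z - p‖ ^ 2)) z) p]
    congr 1
    funext u
    simp only [Pi.mul_apply, add_sub_cancel_left]
  set T := ∫⁻ u, D (p + u) * ENNReal.ofReal (‖u‖ ^ 2) with hTdef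
  -- scaling identity
  have hscale : ∀ l : ℝ, 0 < l → l < 1 →
      ∫⁻ u, D (p + l • u) = ENNReal.ofReal ((l ^ n)⁻¹) := by
    intro l hl0 hl1
    calc ∫⁻ u, D (p + l • u)
        = ∫⁻ w, D (p + w) ∂(Measure.map (l • ·) volume) :=
          (lintegral_map hDp (measurable_id.const_smul l)).symm
      _ = ENNReal.ofReal |(l ^ Module.finrank ℝ (EuclideanSpace ℝ (Fin n)))⁻¹|
            * ∫⁻ w, D (p + w) := by
          rw [Measure.map_addHaar_smul volume (ne_of_gt hl0), lintegral_smul_measure, smul_eq_mul]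
      _ = ENNReal.ofReal ((l ^ n)⁻¹) := by
          rw [htrans, mul_one, finrank_euclideanSpace_fin, abs_of_pos (by positivity)]
  -- per-lambda bound on T
  have hTbound : ∀ l : ℝ, 0 < l → l < 1 →
      T ≤ ENNReal.ofReal (((l ^ n)⁻¹ - 1) / ((1 - l ^ 2) / (2 * t * δ))) := by
    intro l hl0 hl1
    set b : ℝ := (1 - l ^ 2) / (2 * t * δ) with hbdef
    have hb0 : 0 < b := div_pos (by nlinarith) (by positivity)
    -- pointwise inequality
    have hptw : ∀ u, D (p + u) + ENNReal.ofReal b * (D (p + u) * ENNReal.ofReal (‖u‖ ^ 2))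
        ≤ D (p + l • u) := by
      intro u
      have hgle := hkey l hl0 hl1 u
      have hE : (0:ℝ) ≤ c * Real.exp (-(g (p + u)) / δ) := by positivity
      have hone_le : (1:ℝ) + b * ‖u‖ ^ 2 ≤ Real.exp (b * ‖u‖ ^ 2) := by
        have := Real.add_one_le_exp (b * ‖u‖ ^ 2)
        linarith
      have hreal : c * Real.exp (-(g (p + u)) / δ) * (1 + b * ‖u‖ ^ 2)
          ≤ c * Real.exp (-(g (p + l • u)) / δ) := by
        have h3 : -(g (p + u)) / δ + b * ‖u‖ ^ 2 ≤ -(g (p + l • u)) / δ := by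
          have hb : b * ‖u‖ ^ 2 = ((1 - l ^ 2) * ‖u‖ ^ 2 / (2 * t)) / δ := by
            rw [hbdef]; field_simp
          rw [hb, ← add_div, div_le_div_iff₀ hδ hδ]
          nlinarith [hgle]
        calc c * Real.exp (-(g (p + u)) / δ) * (1 + b * ‖u‖ ^ 2)
            ≤ c * Real.exp (-(g (p + u)) / δ) * Real.exp (b * ‖u‖ ^ 2) := by
              apply mul_le_mul_of_nonneg_left hone_le hE
          _ = c * Real.exp (-(g (p + u)) / δ + b * ‖u‖ ^ 2) := by
              rw [mul_assoc, ← Real.exp_add]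
          _ ≤ c * Real.exp (-(g (p + l • u)) / δ) := by
              apply mul_le_mul_of_nonneg_left (Real.exp_le_exp.mpr h3) hc.le
      have heq : D (p + u) + ENNReal.ofReal b * (D (p + u) * ENNReal.ofReal (‖u‖ ^ 2))
          = ENNReal.ofReal (c * Real.exp (-(g (p + u)) / δ) * (1 + b * ‖u‖ ^ 2)) := by
        simp only [hDdef]
        rw [← ENNReal.ofReal_mul hE, ← ENNReal.ofReal_mul hb0.le, ← ENNReal.ofReal_add hE
          (by positivity)]
        congr 1
        ring
      rw [heq]
      exact ENNReal.ofReal_le_ofReal hreal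
    -- integrate
    have hmul_meas : Measurable fun u : EuclideanSpace ℝ (Fin n) =>
        D (p + u) * ENNReal.ofReal (‖u‖ ^ 2) :=
      hDp.mul ((ENNReal.continuous_ofReal.comp (continuous_norm.pow 2)).measurable)
    have hint := lintegral_mono (μ := (volume : Measure (EuclideanSpace ℝ (Fin n)))) hptw
    rw [hscale l hl0 hl1, lintegral_add_left hDp, lintegral_const_mul _ hmul_meas, htrans,
      ← hTdef] at hint
    -- extract
    have hln : (0:ℝ) < l ^ n := by positivity
    have hln1 : l ^ n ≤ 1 := pow_le_one₀ hl0.le hl1.le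
    have hinv1 : (1:ℝ) ≤ (l ^ n)⁻¹ := one_le_inv_iff₀.mpr ⟨hln, hln1⟩
    have hsplit : ENNReal.ofReal ((l ^ n)⁻¹) = ENNReal.ofReal ((l ^ n)⁻¹ - 1) + 1 := by
      rw [← ENNReal.ofReal_one, ← ENNReal.ofReal_add (by linarith) zero_le_one]
      congr 1; ring
    rw [hsplit] at hint
    have hmul : ENNReal.ofReal b * T ≤ ENNReal.ofReal ((l ^ n)⁻¹ - 1) := by
      have := hint
      rw [add_comm (1 : ℝ≥0∞) (ENNReal.ofReal b * T)] at this
      exact (ENNReal.add_le_add_iff_right ENNReal.one_ne_top).mp this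
    rw [ENNReal.ofReal_div_of_pos hb0]
    rw [ENNReal.le_div_iff_mul_le
      (Or.inl (ne_of_gt (ENNReal.ofReal_pos.mpr hb0))) (Or.inl ENNReal.ofReal_ne_top)]
    rwa [mul_comm]
  -- limit as l → 1⁻
  rw [hT]
  set χ : ℝ → ℝ := fun l => 2 * t * δ * (∑ i ∈ Finset.range n, l ^ i) / (l ^ n * (1 + l))
    with hχdef
  have hIoo : Set.Ioo (0:ℝ) 1 ∈ nhdsWithin (1:ℝ) (Set.Iio 1) :=
    Ioo_mem_nhdsLT_of_mem (by constructor <;> norm_num)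
  have hEq : ∀ l ∈ Set.Ioo (0:ℝ) 1,
      ((l ^ n)⁻¹ - 1) / ((1 - l ^ 2) / (2 * t * δ)) = χ l := by
    intro l hl
    have hl0 : (0:ℝ) < l := hl.1
    have hl1 : l < 1 := hl.2
    have hln : l ^ n ≠ 0 := by positivity
    have h1l : 1 - l ≠ 0 := by intro h; nlinarith
    have h1pl : (1:ℝ) + l ≠ 0 := by positivity
    have h1l2 : 1 - l ^ 2 ≠ 0 := by nlinarith
    have hgs : (∑ i ∈ Finset.range n, l ^ i) * (l - 1) = l ^ n - 1 := geom_sum_mul l n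
    rw [hχdef]
    rw [div_eq_div_iff (by positivity) (by positivity)]
    have e1 : ((l ^ n)⁻¹ - 1) * (l ^ n * (1 + l)) = (1 - l ^ n) * (1 + l) := by
      field_simp
    have e2 : 2 * t * δ * (∑ i ∈ Finset.range n, l ^ i) * ((1 - l ^ 2) / (2 * t * δ))
        = (∑ i ∈ Finset.range n, l ^ i) * (1 - l ^ 2) := by
      field_simp
    rw [e1, e2]
    linear_combination (1 + l) * hgs
  have hχcont : ContinuousAt χ 1 := by
    apply ContinuousAt.div
    · fun_prop
    · fun_prop
    · norm_num
  have hχ1 : χ 1 = n * t * δ := by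
    simp only [hχdef, one_pow, Finset.sum_const, Finset.card_range, nsmul_eq_mul, mul_one]
    field_simp
    ring
  have hreal : Filter.Tendsto (fun l : ℝ => ((l ^ n)⁻¹ - 1) / ((1 - l ^ 2) / (2 * t * δ)))
      (nhdsWithin 1 (Set.Iio 1)) (nhds (n * t * δ)) := by
    have h1 : Filter.Tendsto χ (nhdsWithin 1 (Set.Iio 1)) (nhds (n * t * δ)) := by
      rw [← hχ1]
      exact hχcont.continuousWithinAt.tendsto
    apply h1.congr'
    filter_upwards [hIoo] with l hl
    exact (hEq l hl).symm
  have hlim : Filter.Tendsto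
      (fun l : ℝ => ENNReal.ofReal (((l ^ n)⁻¹ - 1) / ((1 - l ^ 2) / (2 * t * δ))))
      (nhdsWithin 1 (Set.Iio 1)) (nhds (ENNReal.ofReal (n * t * δ))) :=
    (ENNReal.continuous_ofReal.tendsto _).comp hreal
  refine ge_of_tendsto hlim ?_
  filter_upwards [hIoo] with l hl
  exact hTbound l hl.1 hl.2
end

section
/- Let (T_k)_{k≥0} be operators on ℝⁿ, each averaged, i.e., T_k = (1 − λ_k)·Id + λ_k·N_k for some λ_k ∈ (0,1) and nonexpansive N_k : ℝⁿ → ℝⁿ, and suppose S = ∩_{k≥0} Fix T_k is nonempty. Let (x_k) satisfy x_{k+1} = T_k x_k + ε_k with Σ_{k=0}^∞ ‖ε_k‖ < ∞. If every cluster point of (x_k) lies in S, then (x_k) converges to a point x* ∈ S. -/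
open Filter Topology

private lemma aux_tendsto_of_quasi {a e : ℕ → ℝ} (ha : ∀ k, 0 ≤ a k)
    (hrec : ∀ k, a (k + 1) ≤ a k + e k) (he : ∀ k, 0 ≤ e k) (hs : Summable e) :
    ∃ L, Tendsto a atTop (𝓝 L) := by
  set E : ℕ → ℝ := fun k => ∑ i ∈ Finset.range k, e i with hEdef
  have hE : Tendsto E atTop (𝓝 (∑' k, e k)) := hs.hasSum.tendsto_sum_nat
  have hEle : ∀ k, E k ≤ ∑' k, e k := fun k => Summable.sum_le_tsum _ (fun i _ => he i) hs
  set g : ℕ → ℝ := fun k => a k - E k with hgdef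
  have hganti : Antitone g := antitone_nat_of_succ_le (fun k => by
    have h1 := hrec k
    simp only [hgdef, hEdef, Finset.sum_range_succ]
    linarith)
  have hgbdd : BddBelow (Set.range g) := ⟨-(∑' k, e k), by
    rintro _ ⟨k, rfl⟩
    have h1 := ha k; have h2 := hEle k
    simp only [hgdef]; linarith⟩
  have hg : Tendsto g atTop (𝓝 (⨅ k, g k)) := tendsto_atTop_ciInf hganti hgbdd
  refine ⟨(⨅ k, g k) + ∑' k, e k, ?_⟩
  have ha' : a = fun k => g k + E k := by funext k; simp [hgdef]
  rw [ha']
  exact hg.add hE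

/-- **Perturbed Krasnosel'skiĭ–Mann convergence (Combettes 2001, Thm 5.2).**
If each `T_k` is averaged, `S = ⋂ Fix T_k` is nonempty, the perturbed iteration
`x_{k+1} = T_k x_k + ε_k` has summable errors, and every cluster point of `(x_k)`
lies in `S`, then `(x_k)` converges to a point of `S`. -/
theorem perturbed_KM_convergence (n : ℕ)
    (T : ℕ → EuclideanSpace ℝ (Fin n) → EuclideanSpace ℝ (Fin n))
    (lam : ℕ → ℝ) (Nop : ℕ → EuclideanSpace ℝ (Fin n) → EuclideanSpace ℝ (Fin n))
    (hlam : ∀ k, lam k ∈ Set.Ioo (0 : ℝ) 1)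
    (hNop : ∀ k (x y : EuclideanSpace ℝ (Fin n)), ‖Nop k x - Nop k y‖ ≤ ‖x - y‖)
    (hT : ∀ k, T k = fun x => (1 - lam k) • x + lam k • Nop k x)
    (S : Set (EuclideanSpace ℝ (Fin n)))
    (hS : S = ⋂ k, {x | T k x = x}) (hSne : S.Nonempty)
    (x : ℕ → EuclideanSpace ℝ (Fin n))
    (ε : ℕ → EuclideanSpace ℝ (Fin n))
    (hx : ∀ k, x (k + 1) = T k (x k) + ε k)
    (hε : Summable fun k => ‖ε k‖)
    (hcluster : ∀ p, MapClusterPt p atTop x → p ∈ S) :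
    ∃ xstar ∈ S, Tendsto x atTop (𝓝 xstar) := by
  -- T is nonexpansive
  have hTne : ∀ k a b, ‖T k a - T k b‖ ≤ ‖a - b‖ := by
    intro k a b
    rw [hT k]
    have hl := hlam k
    have h1 : (1 - lam k) • a + lam k • Nop k a - ((1 - lam k) • b + lam k • Nop k b)
        = (1 - lam k) • (a - b) + lam k • (Nop k a - Nop k b) := by
      simp only [smul_sub]; abel
    simp only [h1]
    calc ‖(1 - lam k) • (a - b) + lam k • (Nop k a - Nop k b)‖
        ≤ ‖(1 - lam k) • (a - b)‖ + ‖lam k • (Nop k a - Nop k b)‖ := norm_add_le _ _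
      _ = (1 - lam k) * ‖a - b‖ + lam k * ‖Nop k a - Nop k b‖ := by
          rw [norm_smul, norm_smul, Real.norm_of_nonneg (by linarith [hl.2]),
            Real.norm_of_nonneg hl.1.le]
      _ ≤ (1 - lam k) * ‖a - b‖ + lam k * ‖a - b‖ := by
          have := hNop k a b; nlinarith [hl.1]
      _ = ‖a - b‖ := by ring
  -- quasi-Fejér estimate relative to any s ∈ S
  have key : ∀ s ∈ S, ∀ k, ‖x (k + 1) - s‖ ≤ ‖x k - s‖ + ‖ε k‖ := by
    intro s hs k
    have hfix : T k s = s := Set.mem_iInter.mp (hS ▸ hs) k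
    have h1 : x (k + 1) - s = (T k (x k) - T k s) + ε k := by rw [hx k, hfix]; abel
    calc ‖x (k + 1) - s‖ = ‖(T k (x k) - T k s) + ε k‖ := by rw [h1]
      _ ≤ ‖T k (x k) - T k s‖ + ‖ε k‖ := norm_add_le _ _
      _ ≤ ‖x k - s‖ + ‖ε k‖ := by linarith [hTne k (x k) s]
  have conv : ∀ s ∈ S, ∃ L, Tendsto (fun k => ‖x k - s‖) atTop (𝓝 L) := fun s hs =>
    aux_tendsto_of_quasi (fun k => norm_nonneg _) (key s hs) (fun k => norm_nonneg _) hε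
  -- boundedness and a cluster point
  obtain ⟨z, hz⟩ := hSne
  obtain ⟨L, hL⟩ := conv z hz
  obtain ⟨C, hC⟩ := hL.bddAbove_range
  have hball : ∀ k, x k ∈ Metric.closedBall z C := by
    intro k
    have : ‖x k - z‖ ≤ C := hC ⟨k, rfl⟩
    simpa [Metric.mem_closedBall, dist_eq_norm] using this
  obtain ⟨p, -, φ, hφmono, hφ⟩ :=
    tendsto_subseq_of_bounded Metric.isBounded_closedBall hball
  have hpS : p ∈ S := hcluster p (MapClusterPt.of_comp hφmono.tendsto_atTop hφ.mapClusterPt)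
  obtain ⟨L', hL'⟩ := conv p hpS
  have h0 : Tendsto (fun j => ‖x (φ j) - p‖) atTop (𝓝 0) := by
    have := (hφ.sub (tendsto_const_nhds (x := p))).norm
    simpa using this
  have hL'0 : L' = 0 :=
    tendsto_nhds_unique (hL'.comp hφmono.tendsto_atTop) h0
  refine ⟨p, hpS, ?_⟩
  rw [tendsto_iff_norm_sub_tendsto_zero]
  rw [hL'0] at hL'
  exact hL'
end

section
/- Let f : ℝⁿ → ℝ be convex with nonempty solution set S = argmin f and minimal value f*. Let x_{k+1} = prox_{t_k f}(x_k) with step sizes t_k = 1/(k+1). Then: (i) ‖x_{k+1} − u‖ ≤ ‖x_k − u‖ for every u ∈ S (Fejér monotonicity), so the sequence (x_k) is bounded; (ii) f(x_k) is nonincreasing and converges to f*; and (iii) every cluster point of (x_k) belongs to S. -/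
open Filter Topology

private lemma prox_ineq {E : Type*} [NormedAddCommGroup E] [InnerProductSpace ℝ E]
    {f : E → ℝ} (hf : ConvexOn ℝ Set.univ f) {t : ℝ} (ht : 0 < t)
    {x xp : E} (hxp : IsMinOn (fun z => f z + ‖z - x‖ ^ 2 / (2 * t)) Set.univ xp)
    (u : E) :
    f xp + ‖xp - x‖ ^ 2 / (2 * t) + ‖u - xp‖ ^ 2 / (2 * t)
      ≤ f u + ‖u - x‖ ^ 2 / (2 * t) := by
  set s : ℝ := (2 * t)⁻¹ with hs_def
  have hs : 0 < s := by positivity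
  have hdiv : ∀ r : ℝ, r / (2 * t) = r * s := fun r => by rw [div_eq_mul_inv]
  rw [hdiv, hdiv, hdiv]
  -- step inequality for each lam in (0,1)
  have step : ∀ lam : ℝ, 0 < lam → lam < 1 →
      f xp + ‖xp - x‖ ^ 2 * s + (1 - lam) * (‖u - xp‖ ^ 2 * s)
        ≤ f u + ‖u - x‖ ^ 2 * s := by
    intro lam hl0 hl1
    set b : E := xp - x with hb
    set c : E := u - x with hc
    have hcb : c - b = u - xp := by simp [hb, hc]
    set z : E := (1 - lam) • xp + lam • u with hz
    have hzx : z - x = (1 - lam) • b + lam • c := by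
      rw [hz, hb, hc]; module
    -- convexity
    have hconv : f z ≤ (1 - lam) * f xp + lam * f u :=
      hf.2 (Set.mem_univ xp) (Set.mem_univ u) (by linarith) (le_of_lt hl0) (by ring)
    -- norm identity
    have hid : ‖(1 - lam) • b + lam • c‖ ^ 2
        = (1 - lam) * ‖b‖ ^ 2 + lam * ‖c‖ ^ 2 - lam * (1 - lam) * ‖c - b‖ ^ 2 := by
      have h1 : ‖(1 - lam) • b + lam • c‖ ^ 2
          = inner ℝ ((1 - lam) • b + lam • c) ((1 - lam) • b + lam • c) :=
        (real_inner_self_eq_norm_sq _).symm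
      have h2 : ‖c - b‖ ^ 2 = ‖c‖ ^ 2 - 2 * inner ℝ c b + ‖b‖ ^ 2 := by
        rw [← real_inner_self_eq_norm_sq, ← real_inner_self_eq_norm_sq,
          ← real_inner_self_eq_norm_sq]
        simp [inner_sub_left, inner_sub_right, real_inner_comm c b]
        rw [norm_sub_sq_real]
      have h3 : (inner ℝ b b : ℝ) = ‖b‖ ^ 2 := real_inner_self_eq_norm_sq b
      have h4 : (inner ℝ c c : ℝ) = ‖c‖ ^ 2 := real_inner_self_eq_norm_sq c
      have h5 : (inner ℝ b c : ℝ) = inner ℝ c b := real_inner_comm c b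
      simp only [inner_add_left, inner_add_right, real_inner_smul_left,
        real_inner_smul_right] at h1
      rw [h1, h2, h3, h4, h5]; ring
    -- minimality at z
    have hmin : f xp + ‖b‖ ^ 2 / (2 * t) ≤ f z + ‖z - x‖ ^ 2 / (2 * t) :=
      hxp (Set.mem_univ z)
    rw [hdiv, hdiv, hzx, hid] at hmin
    rw [hcb] at hid
    -- combine
    have key : lam * (f xp + ‖b‖ ^ 2 * s + (1 - lam) * (‖u - xp‖ ^ 2 * s))
        ≤ lam * (f u + ‖c‖ ^ 2 * s) := by
      rw [← hcb]
      nlinarith [hmin, hconv, hs]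
    exact le_of_mul_le_mul_left key hl0
  -- take lam -> 0
  refine le_of_forall_pos_le_add fun ε hε => ?_
  set C : ℝ := ‖u - xp‖ ^ 2 * s with hC
  have hC0 : 0 ≤ C := by positivity
  set lam : ℝ := min (1/2) (ε / (C + 1)) with hlam
  have hl0 : 0 < lam := lt_min (by norm_num) (by positivity)
  have hl1 : lam < 1 := lt_of_le_of_lt (min_le_left _ _) (by norm_num)
  have h := step lam hl0 hl1
  have hlamC : lam * C ≤ ε := by
    have h1 : lam ≤ ε / (C + 1) := min_le_right _ _
    have h2 : lam * C ≤ (ε / (C + 1)) * C := by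
      apply mul_le_mul_of_nonneg_right h1 hC0
    have h3 : (ε / (C + 1)) * C ≤ ε := by
      rw [div_mul_eq_mul_div, div_le_iff₀ (by linarith)]
      nlinarith
    linarith
  nlinarith [h]

/-- **Proximal point method with diminishing step sizes `t_k = 1/(k+1)`.**
The iterates are Fejér monotone with respect to `argmin f` (hence bounded),
the function values decrease to the minimum value `f* = f(u*)`, and every
cluster point of the sequence is a minimizer of `f`. -/
theorem ppm_diminishing_stepsizes (n : ℕ) (f : EuclideanSpace ℝ (Fin n) → ℝ)
    (hf : ConvexOn ℝ Set.univ f)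
    (ustar : EuclideanSpace ℝ (Fin n)) (hustar : ∀ z, f ustar ≤ f z)
    (x : ℕ → EuclideanSpace ℝ (Fin n))
    (hx : ∀ k : ℕ, IsMinOn
      (fun z => f z + ‖z - x k‖ ^ 2 / (2 * (1 / ((k : ℝ) + 1)))) Set.univ (x (k + 1))) :
    ((∀ (k : ℕ) (u : EuclideanSpace ℝ (Fin n)), (∀ z, f u ≤ f z) →
        ‖x (k + 1) - u‖ ≤ ‖x k - u‖) ∧ Bornology.IsBounded (Set.range x)) ∧
    ((∀ k, f (x (k + 1)) ≤ f (x k)) ∧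
      Tendsto (fun k => f (x k)) atTop (𝓝 (f ustar))) ∧
    (∀ p, MapClusterPt p atTop x → ∀ z, f p ≤ f z) := by
  have htpos : ∀ k : ℕ, (0 : ℝ) < 1 / ((k : ℝ) + 1) := fun k => by positivity
  have key : ∀ k : ℕ, ∀ u : EuclideanSpace ℝ (Fin n),
      f (x (k + 1)) + ‖x (k + 1) - x k‖ ^ 2 / (2 * (1 / ((k : ℝ) + 1)))
        + ‖u - x (k + 1)‖ ^ 2 / (2 * (1 / ((k : ℝ) + 1)))
        ≤ f u + ‖u - x k‖ ^ 2 / (2 * (1 / ((k : ℝ) + 1))) :=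
    fun k u => prox_ineq hf (htpos k) (hx k) u
  -- Fejér monotonicity
  have hFej : ∀ (k : ℕ) (u : EuclideanSpace ℝ (Fin n)), (∀ z, f u ≤ f z) →
      ‖x (k + 1) - u‖ ≤ ‖x k - u‖ := by
    intro k u hu
    have h := key k u
    have h1 : f u ≤ f (x (k + 1)) := hu _
    have h2 : 0 ≤ ‖x (k + 1) - x k‖ ^ 2 / (2 * (1 / ((k : ℝ) + 1))) := by positivity
    have h3 : ‖u - x (k + 1)‖ ^ 2 / (2 * (1 / ((k : ℝ) + 1)))
        ≤ ‖u - x k‖ ^ 2 / (2 * (1 / ((k : ℝ) + 1))) := by linarith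
    have h4 : ‖u - x (k + 1)‖ ^ 2 ≤ ‖u - x k‖ ^ 2 := by
      have hD : (0:ℝ) < 2 * (1 / ((k : ℝ) + 1)) := by positivity
      exact (div_le_div_iff_of_pos_right hD).mp h3
    rw [norm_sub_rev (x (k+1)) u, norm_sub_rev (x k) u]
    nlinarith [norm_nonneg (u - x (k+1)), norm_nonneg (u - x k)]
  -- boundedness
  have hbd : ∀ k, ‖x k - ustar‖ ≤ ‖x 0 - ustar‖ := by
    intro k
    induction k with
    | zero => exact le_refl _
    | succ m ih => exact le_trans (hFej m ustar hustar) ih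
  have hbounded : Bornology.IsBounded (Set.range x) := by
    apply (Metric.isBounded_closedBall (x := ustar) (r := ‖x 0 - ustar‖)).subset
    rintro y ⟨k, rfl⟩
    simpa [Metric.mem_closedBall, dist_eq_norm] using hbd k
  -- decreasing values
  have hdec : ∀ k, f (x (k + 1)) ≤ f (x k) := by
    intro k
    have h : f (x (k + 1)) + ‖x (k + 1) - x k‖ ^ 2 / (2 * (1 / ((k : ℝ) + 1))) ≤ f (x k) := by
      have h' := hx k (Set.mem_univ (x k))
      simpa using h'
    have h2 : 0 ≤ ‖x (k + 1) - x k‖ ^ 2 / (2 * (1 / ((k : ℝ) + 1))) := by positivity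
    linarith
  have hanti : Antitone fun k => f (x k) := antitone_nat_of_succ_le hdec
  -- summation bound
  have hterm : ∀ k : ℕ, (1 / ((k : ℝ) + 1)) * (f (x (k + 1)) - f ustar)
      ≤ (‖ustar - x k‖ ^ 2 - ‖ustar - x (k + 1)‖ ^ 2) / 2 := by
    intro k
    have h := key k ustar
    set c : ℝ := (k : ℝ) + 1 with hc
    have hc0 : (0:ℝ) < c := by positivity
    have hdiv : ∀ r : ℝ, r / (2 * (1 / c)) = r * c / 2 := fun r => by
      field_simp
    rw [hdiv, hdiv, hdiv] at h
    have hA : 0 ≤ ‖x (k + 1) - x k‖ ^ 2 * c / 2 := by positivity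
    rw [one_div, inv_mul_eq_div, div_le_div_iff₀ hc0 (by norm_num : (0:ℝ) < 2)]
    nlinarith [h]
  have hsum : ∀ N : ℕ, ∑ k ∈ Finset.range N, (1 / ((k : ℝ) + 1)) * (f (x (k + 1)) - f ustar)
      ≤ ‖ustar - x 0‖ ^ 2 / 2 := by
    intro N
    calc ∑ k ∈ Finset.range N, (1 / ((k : ℝ) + 1)) * (f (x (k + 1)) - f ustar)
        ≤ ∑ k ∈ Finset.range N, (‖ustar - x k‖ ^ 2 - ‖ustar - x (k + 1)‖ ^ 2) / 2 :=
          Finset.sum_le_sum fun k _ => hterm k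
      _ = (‖ustar - x 0‖ ^ 2 - ‖ustar - x N‖ ^ 2) / 2 := by
          rw [← Finset.sum_div, Finset.sum_range_sub' fun k => ‖ustar - x k‖ ^ 2]
      _ ≤ ‖ustar - x 0‖ ^ 2 / 2 := by
          have : 0 ≤ ‖ustar - x N‖ ^ 2 := by positivity
          linarith
  -- convergence of values
  have hsmall : ∀ ε : ℝ, 0 < ε → ∃ m : ℕ, f (x m) - f ustar < ε := by
    intro ε hε
    by_contra hcon
    push_neg at hcon
    have hlb : ∀ N : ℕ, ∑ k ∈ Finset.range N, (1 / ((k : ℝ) + 1)) * ε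
        ≤ ‖ustar - x 0‖ ^ 2 / 2 := by
      intro N
      refine le_trans (Finset.sum_le_sum fun k _ => ?_) (hsum N)
      exact mul_le_mul_of_nonneg_left (hcon (k + 1)) (le_of_lt (htpos k))
    obtain ⟨N, hN⟩ := (Real.tendsto_sum_range_one_div_nat_succ_atTop.eventually_gt_atTop
      (‖ustar - x 0‖ ^ 2 / 2 / ε)).exists
    have h1 := hlb N
    rw [← Finset.sum_mul] at h1
    have h2 : ‖ustar - x 0‖ ^ 2 / 2 / ε * ε < (∑ i ∈ Finset.range N, (1 / ((i:ℝ) + 1))) * ε :=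
      mul_lt_mul_of_pos_right hN hε
    rw [div_mul_cancel₀ _ (ne_of_gt hε)] at h2
    linarith
  have htend : Tendsto (fun k => f (x k)) atTop (𝓝 (f ustar)) := by
    rw [Metric.tendsto_atTop]
    intro ε hε
    obtain ⟨m, hm⟩ := hsmall ε hε
    refine ⟨m, fun k hk => ?_⟩
    have h1 : f (x k) ≤ f (x m) := hanti hk
    have h2 : f ustar ≤ f (x k) := hustar _
    rw [Real.dist_eq, abs_lt]
    constructor <;> linarith
  -- cluster points
  refine ⟨⟨hFej, hbounded⟩, ⟨hdec, htend⟩, ?_⟩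
  intro p hp z
  obtain ⟨ψ, hψ, hten⟩ := TopologicalSpace.FirstCountableTopology.tendsto_subseq hp
  have hcf : Continuous f := by
    rw [← continuousOn_univ]
    exact hf.continuousOn isOpen_univ
  have h1 : Tendsto (fun k => f (x (ψ k))) atTop (𝓝 (f p)) :=
    (hcf.tendsto p).comp hten
  have h2 : Tendsto (fun k => f (x (ψ k))) atTop (𝓝 (f ustar)) :=
    htend.comp hψ.tendsto_atTop
  have : f p = f ustar := tendsto_nhds_unique h1 h2
  rw [this]; exact hustar z
end

section
/- Let f : ℝⁿ → ℝ be convex and differentiable with L-Lipschitz gradient, let g : ℝⁿ → ℝ be convex, set F = f + g, let t > 0, x ∈ ℝⁿ, and x⁺ = prox_{tg}(x − t∇f(x)). Then for every u ∈ ℝⁿ, 2t(F(x⁺) − F(u)) ≤ ‖x − u‖² − ‖x⁺ − u‖² − (1 − Lt)‖x⁺ − x‖². -/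
open Set Filter intervalIntegral
open scoped RealInnerProductSpace Topology

variable {E : Type*} [NormedAddCommGroup E] [InnerProductSpace ℝ E] [CompleteSpace E]

private lemma aux_hasDerivAt_line (f : E → ℝ) (hf : Differentiable ℝ f) (a d : E) (s : ℝ) :
    HasDerivAt (fun r : ℝ => f (a + r • d)) ⟪gradient f (a + s • d), d⟫ s := by
  have hline : HasDerivAt (fun r : ℝ => a + r • d) d s := by
    simpa using ((hasDerivAt_id s).smul_const d).const_add a
  have hg := ((hf (a + s • d)).hasGradientAt).hasFDerivAt
  have := hg.comp_hasDerivAt s hline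
  simpa [InnerProductSpace.toDual_apply_apply, Function.comp_def] using this

private lemma aux_convex_first_order (f : E → ℝ) (hconv : ConvexOn ℝ univ f)
    (hf : Differentiable ℝ f) (x y : E) :
    f x + ⟪gradient f x, y - x⟫ ≤ f y := by
  set φ : ℝ → ℝ := fun r => f (x + r • (y - x)) with hφ
  have hderiv : HasDerivAt φ ⟪gradient f x, y - x⟫ 0 := by
    simpa using aux_hasDerivAt_line f hf x (y - x) 0
  have hslope : ∀ s ∈ Ioc (0:ℝ) 1, slope φ 0 s ≤ f y - f x := by
    intro s hs
    have hcx : φ s ≤ (1 - s) * f x + s * f y := by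
      have h := hconv.2 (mem_univ x) (mem_univ y)
        (by linarith [hs.2] : (0:ℝ) ≤ 1 - s) hs.1.le (by ring)
      have hz : (1 - s) • x + s • y = x + s • (y - x) := by
        simp [smul_sub, sub_smul]; abel
      simpa [hz] using h
    have hφ0 : φ 0 = f x := by simp [hφ]
    rw [slope_def_field, sub_zero, div_le_iff₀ hs.1, hφ0]
    nlinarith [hcx]
  have htend : Tendsto (slope φ 0) (𝓝[>] (0:ℝ)) (𝓝 ⟪gradient f x, y - x⟫) :=
    (hasDerivAt_iff_tendsto_slope.1 hderiv).mono_left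
      (nhdsWithin_mono 0 fun r hr => ne_of_gt hr)
  have hle : ⟪gradient f x, y - x⟫ ≤ f y - f x :=
    le_of_tendsto htend (eventually_of_mem
      (Ioc_mem_nhdsGT_of_mem (by norm_num : (0:ℝ) ∈ Ico (0:ℝ) 1)) hslope)
  linarith

private lemma aux_descent (f : E → ℝ) (hf : Differentiable ℝ f) (L : ℝ)
    (hLip : ∀ y z : E, ‖gradient f y - gradient f z‖ ≤ L * ‖y - z‖) (x y : E) :
    f y ≤ f x + ⟪gradient f x, y - x⟫ + L / 2 * ‖y - x‖ ^ 2 := by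
  set d := y - x with hd
  have hgcont : Continuous fun p : E => gradient f p := by
    have hl : LipschitzWith (Real.toNNReal L) (gradient f) := by
      apply LipschitzWith.of_dist_le_mul
      intro a b
      calc dist (gradient f a) (gradient f b) = ‖gradient f a - gradient f b‖ :=
            dist_eq_norm _ _
        _ ≤ L * ‖a - b‖ := hLip a b
        _ ≤ Real.toNNReal L * dist a b := by
            rw [dist_eq_norm]
            exact mul_le_mul_of_nonneg_right (Real.le_coe_toNNReal L) (norm_nonneg _)
    exact hl.continuous
  have hcont : Continuous fun s : ℝ => ⟪gradient f (x + s • d), d⟫ := by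
    exact (hgcont.comp (continuous_const.add (continuous_id.smul continuous_const))).inner
      continuous_const
  have hint : ∫ s in (0:ℝ)..1, ⟪gradient f (x + s • d), d⟫ = f y - f x := by
    have h := integral_eq_sub_of_hasDerivAt
      (fun s _ => aux_hasDerivAt_line f hf x d s) (hcont.intervalIntegrable 0 1)
    simpa [hd] using h
  have hbound : ∀ s ∈ Icc (0:ℝ) 1,
      ⟪gradient f (x + s • d), d⟫ ≤ ⟪gradient f x, d⟫ + L * ‖d‖ ^ 2 * s := by
    intro s hs
    have h1 : ⟪gradient f (x + s • d), d⟫ - ⟪gradient f x, d⟫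
        = ⟪gradient f (x + s • d) - gradient f x, d⟫ := by rw [inner_sub_left]
    have h2 : ⟪gradient f (x + s • d) - gradient f x, d⟫
        ≤ ‖gradient f (x + s • d) - gradient f x‖ * ‖d‖ := real_inner_le_norm _ _
    have h3 : ‖gradient f (x + s • d) - gradient f x‖ ≤ L * (s * ‖d‖) := by
      have h := hLip (x + s • d) x
      simpa [norm_smul, abs_of_nonneg hs.1] using h
    have h4 : ‖gradient f (x + s • d) - gradient f x‖ * ‖d‖ ≤ L * (s * ‖d‖) * ‖d‖ :=
      mul_le_mul_of_nonneg_right h3 (norm_nonneg _)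
    have h5 : L * (s * ‖d‖) * ‖d‖ = L * ‖d‖ ^ 2 * s := by ring
    linarith
  have hle : ∫ s in (0:ℝ)..1, ⟪gradient f (x + s • d), d⟫
      ≤ ∫ s in (0:ℝ)..1, (⟪gradient f x, d⟫ + L * ‖d‖ ^ 2 * s) := by
    apply integral_mono_on zero_le_one (hcont.intervalIntegrable 0 1)
      ((continuous_const.add (continuous_const.mul continuous_id)).intervalIntegrable 0 1)
      hbound
  have heval : ∫ s in (0:ℝ)..1, (⟪gradient f x, d⟫ + L * ‖d‖ ^ 2 * s)
      = ⟪gradient f x, d⟫ + L / 2 * ‖d‖ ^ 2 := by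
    have hi : IntervalIntegrable (fun s : ℝ => L * ‖d‖ ^ 2 * s) MeasureTheory.volume 0 1 :=
      Continuous.intervalIntegrable (by fun_prop) 0 1
    rw [intervalIntegral.integral_add intervalIntegrable_const hi,
      intervalIntegral.integral_const]
    have h2 : (∫ s in (0:ℝ)..1, L * ‖d‖ ^ 2 * s) = L * ‖d‖ ^ 2 * ∫ s in (0:ℝ)..1, s :=
      intervalIntegral.integral_const_mul _ _
    rw [h2, integral_id]
    norm_num
    ring
  rw [hint] at hle
  rw [heval] at hle
  linarith

private lemma aux_prox (g : E → ℝ) (hg : ConvexOn ℝ univ g) (t : ℝ) (ht : 0 < t) (v xp : E)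
    (hxp : IsMinOn (fun z => g z + ‖z - v‖ ^ 2 / (2 * t)) univ xp) (u : E) :
    (g xp - g u) * t ≤ ⟪v - xp, xp - u⟫ := by
  set c := ⟪xp - v, u - xp⟫ with hc
  set N := ‖u - xp‖ ^ 2 with hN
  have key : ∀ s ∈ Ioc (0:ℝ) 1, g xp - g u ≤ c / t + s * (N / (2 * t)) := by
    intro s hs
    have hmin := hxp (mem_univ (xp + s • (u - xp)))
    simp only [Set.mem_setOf_eq] at hmin
    have hcx : g (xp + s • (u - xp)) ≤ (1 - s) * g xp + s * g u := by
      have h := hg.2 (mem_univ xp) (mem_univ u)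
        (by linarith [hs.2] : (0:ℝ) ≤ 1 - s) hs.1.le (by ring)
      have hz : (1 - s) • xp + s • u = xp + s • (u - xp) := by
        simp [smul_sub, sub_smul]; abel
      simpa [hz] using h
    have hnorm : ‖xp + s • (u - xp) - v‖ ^ 2
        = ‖xp - v‖ ^ 2 + 2 * (s * c) + s ^ 2 * N := by
      have heq : xp + s • (u - xp) - v = (xp - v) + s • (u - xp) := by abel
      rw [heq, norm_add_sq_real, real_inner_smul_right, norm_smul, Real.norm_eq_abs,
        mul_pow, sq_abs, hc, hN]
    have h1 : g xp + ‖xp - v‖ ^ 2 / (2 * t)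
        ≤ (1 - s) * g xp + s * g u
          + (‖xp - v‖ ^ 2 + 2 * (s * c) + s ^ 2 * N) / (2 * t) := by
      have := hmin
      rw [hnorm] at this
      linarith
    have expand : (‖xp - v‖ ^ 2 + 2 * (s * c) + s ^ 2 * N) / (2 * t)
        = ‖xp - v‖ ^ 2 / (2 * t) + s * (c / t) + s * (s * (N / (2 * t))) := by
      field_simp
    rw [expand] at h1
    have h3 : s * (g xp - g u) ≤ s * (c / t + s * (N / (2 * t))) := by
      have : s * (c / t + s * (N / (2 * t))) = s * (c / t) + s * (s * (N / (2 * t))) := by ring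
      rw [this]; linarith
    exact le_of_mul_le_mul_left h3 hs.1
  have htend : Tendsto (fun s : ℝ => c / t + s * (N / (2 * t))) (𝓝[>] (0:ℝ)) (𝓝 (c / t)) := by
    have hct : ContinuousAt (fun s : ℝ => c / t + s * (N / (2 * t))) 0 := by fun_prop
    have h0 : Tendsto (fun s : ℝ => c / t + s * (N / (2 * t))) (𝓝 0) (𝓝 (c / t)) := by
      simpa using hct.tendsto
    exact h0.mono_left nhdsWithin_le_nhds
  have hfin : g xp - g u ≤ c / t :=
    ge_of_tendsto htend (eventually_of_mem
      (Ioc_mem_nhdsGT_of_mem (by norm_num : (0:ℝ) ∈ Ico (0:ℝ) 1)) key)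
  have hcc : ⟪v - xp, xp - u⟫ = c := by
    rw [hc, show v - xp = -(xp - v) by abel, show xp - u = -(u - xp) by abel, inner_neg_neg]
  rw [hcc]
  exact (le_div_iff₀ ht).mp hfin



/-- **Three-point inequality for the proximal gradient step.** For convex `f` with
`L`-Lipschitz gradient, convex `g`, `F = f + g`, `t > 0`, and
`x⁺ = prox_{tg}(x − t∇f(x))`, every `u` satisfies
`2t(F(x⁺) − F(u)) ≤ ‖x − u‖² − ‖x⁺ − u‖² − (1 − Lt)‖x⁺ − x‖²`. -/
theorem pgd_three_point_inequality (n : ℕ)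
    (f g : EuclideanSpace ℝ (Fin n) → ℝ)
    (hfconv : ConvexOn ℝ Set.univ f) (hgconv : ConvexOn ℝ Set.univ g)
    (hfdiff : Differentiable ℝ f) (L : ℝ)
    (hLip : ∀ y z : EuclideanSpace ℝ (Fin n),
      ‖gradient f y - gradient f z‖ ≤ L * ‖y - z‖)
    (t : ℝ) (ht : 0 < t) (x xp : EuclideanSpace ℝ (Fin n))
    (hxp : IsMinOn
      (fun z => g z + ‖z - (x - t • gradient f x)‖ ^ 2 / (2 * t)) Set.univ xp) :
    ∀ u : EuclideanSpace ℝ (Fin n),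
      2 * t * ((f xp + g xp) - (f u + g u))
        ≤ ‖x - u‖ ^ 2 - ‖xp - u‖ ^ 2 - (1 - L * t) * ‖xp - x‖ ^ 2 := by
  intro u
  set v : EuclideanSpace ℝ (Fin n) := x - t • gradient f x with hv
  have hA : f xp ≤ f x + ⟪gradient f x, xp - x⟫ + L / 2 * ‖xp - x‖ ^ 2 :=
    aux_descent f hfdiff L hLip x xp
  have hB : f x + ⟪gradient f x, u - x⟫ ≤ f u :=
    aux_convex_first_order f hfconv hfdiff x u
  have hC : (g xp - g u) * t ≤ ⟪v - xp, xp - u⟫ :=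
    aux_prox g hgconv t ht v xp hxp u
  have hvexp : ⟪v - xp, xp - u⟫
      = ⟪x - xp, xp - u⟫ - t * ⟪gradient f x, xp - u⟫ := by
    rw [hv, show x - t • gradient f x - xp = (x - xp) - t • gradient f x by abel,
      inner_sub_left, real_inner_smul_left]
  have hsplit : ⟪gradient f x, xp - x⟫ - ⟪gradient f x, u - x⟫
      = ⟪gradient f x, xp - u⟫ := by
    rw [← inner_sub_right]
    congr 1
    abel
  have hpol : ‖x - u‖ ^ 2 = ‖x - xp‖ ^ 2 + 2 * ⟪x - xp, xp - u⟫ + ‖xp - u‖ ^ 2 := by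
    have h := norm_add_sq_real (x - xp) (xp - u)
    rw [show (x - xp) + (xp - u) = x - u by abel] at h
    exact h
  have hnn : ‖x - xp‖ = ‖xp - x‖ := norm_sub_rev _ _
  rw [hvexp] at hC
  have hnn2 : ‖x - xp‖ ^ 2 = ‖xp - x‖ ^ 2 := by rw [hnn]
  have hA' : 2 * t * (f xp)
      ≤ 2 * t * (f x + ⟪gradient f x, xp - x⟫ + L / 2 * ‖xp - x‖ ^ 2) :=
    mul_le_mul_of_nonneg_left hA (by linarith)
  have hB' : 2 * t * (f x + ⟪gradient f x, u - x⟫) ≤ 2 * t * (f u) :=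
    mul_le_mul_of_nonneg_left hB (by linarith)
  have hsplit' : t * (⟪gradient f x, xp - x⟫ - ⟪gradient f x, u - x⟫)
      = t * ⟪gradient f x, xp - u⟫ := by rw [hsplit]
  linarith [hA', hB', hC, hsplit', hpol, hnn2]
end

section
/- Let f : ℝⁿ → ℝ be convex and differentiable with L-Lipschitz gradient, g : ℝⁿ → ℝ convex, F = f + g, and suppose S = argmin F is nonempty with minimal value F*. Let x_{k+1} = prox_{t_k g}(x_k − t_k ∇f(x_k)) with step sizes satisfying 0 < t_k ≤ 1/L and Σ_{k=0}^∞ t_k = ∞. Then: (i) ‖x_{k+1} − u‖ ≤ ‖x_k − u‖ for every u ∈ S, so (x_k) is bounded; (ii) F(x_k) is nonincreasing and converges to F*; and (iii) every cluster point of (x_k) belongs to S. -/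
open Filter Topology

section PGDAux

variable {n : ℕ}

local notation "E" => EuclideanSpace ℝ (Fin n)
local notation "⟪" a ", " b "⟫" => @inner ℝ _ _ a b

lemma pgd_norm_combo (a b : E) (l : ℝ) :
    ‖(1-l)•a + l•b‖^2 = (1-l)*‖a‖^2 + l*‖b‖^2 - l*(1-l)*‖a-b‖^2 := by
  simp only [← real_inner_self_eq_norm_sq, inner_add_add_self, inner_sub_sub_self,
    real_inner_smul_left, real_inner_smul_right]
  ring

lemma pgd_norm_add_smul (a b : E) (s : ℝ) :
    ‖a + s•b‖^2 = ‖a‖^2 + 2*s*⟪b, a⟫ + s^2*‖b‖^2 := by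
  simp only [← real_inner_self_eq_norm_sq, inner_add_add_self,
    real_inner_smul_left, real_inner_smul_right, real_inner_comm a b]
  ring

lemma pgd_hasDerivAt (f : E → ℝ) (hf : Differentiable ℝ f) (a v : E) (s : ℝ) :
    HasDerivAt (fun s : ℝ => f (a + s•v)) ⟪gradient f (a + s•v), v⟫ s := by
  have hc : HasDerivAt (fun s : ℝ => a + s•v) v s := by
    simpa using ((hasDerivAt_id s).smul_const v).const_add a
  have hg := (hf (a + s•v)).hasGradientAt
  have := hg.hasFDerivAt.comp_hasDerivAt s hc
  simpa [InnerProductSpace.toDual_apply_apply, Function.comp_def] using this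

lemma pgd_grad_ineq (f : E → ℝ) (hconv : ConvexOn ℝ Set.univ f)
    (hf : Differentiable ℝ f) (a y : E) :
    f a + ⟪gradient f a, y - a⟫ ≤ f y := by
  set φ : ℝ → ℝ := fun s => f (a + s•(y-a)) with hφ
  have hconvφ : ConvexOn ℝ Set.univ φ := by
    have := hconv.comp_affineMap (AffineMap.lineMap a y)
    have heq : φ = f ∘ (AffineMap.lineMap a y) := by
      funext s
      simp [φ, AffineMap.lineMap_apply, add_comm]
    rw [heq]
    simpa using this
  have hd : HasDerivAt φ ⟪gradient f a, y - a⟫ 0 := by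
    simpa using pgd_hasDerivAt f hf a (y-a) 0
  have hsl := hconvφ.le_slope_of_hasDerivAt (Set.mem_univ (0:ℝ)) (Set.mem_univ (1:ℝ))
    zero_lt_one hd
  have h0 : φ 0 = f a := by simp [φ]
  have h1 : φ 1 = f y := by simp [φ]
  rw [slope_def_field] at hsl
  rw [h0, h1] at hsl
  rw [show (1:ℝ)-0 = 1 by norm_num, div_one] at hsl
  linarith

lemma pgd_descent (f : E → ℝ) (hf : Differentiable ℝ f) (L : ℝ)
    (hLip : ∀ y z : E, ‖gradient f y - gradient f z‖ ≤ L * ‖y - z‖) (a y : E) :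
    f y ≤ f a + ⟪gradient f a, y - a⟫ + L/2 * ‖y - a‖^2 := by
  set v := y - a with hv
  set ψ : ℝ → ℝ := fun s => f (a + s•v) - s*⟪gradient f a, v⟫ - L/2*s^2*‖v‖^2 with hψ
  have hd : ∀ s : ℝ, HasDerivAt ψ
      (⟪gradient f (a + s•v), v⟫ - ⟪gradient f a, v⟫ - L*s*‖v‖^2) s := by
    intro s
    have h1 := pgd_hasDerivAt f hf a v s
    have h2 : HasDerivAt (fun s : ℝ => s*⟪gradient f a, v⟫) ⟪gradient f a, v⟫ s := by
      simpa using (hasDerivAt_id s).mul_const ⟪gradient f a, v⟫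
    have h3 : HasDerivAt (fun s : ℝ => L/2*s^2*‖v‖^2) (L*s*‖v‖^2) s := by
      have hp : HasDerivAt (fun s : ℝ => s^2) (2*s) s := by
        simpa using hasDerivAt_pow 2 s
      have := (hp.const_mul (L/2)).mul_const (‖v‖^2)
      exact this.congr_deriv (by ring)
    simpa [hψ, Pi.sub_def] using (h1.sub h2).sub h3
  have hanti : AntitoneOn ψ (Set.Icc 0 1) := by
    apply antitoneOn_of_deriv_nonpos (convex_Icc 0 1)
      (fun s _ => ((hd s).continuousAt).continuousWithinAt)
      (fun s _ => ((hd s).differentiableAt).differentiableWithinAt)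
    intro s hs
    rw [interior_Icc] at hs
    rw [(hd s).deriv]
    have hcs : ⟪gradient f (a + s•v) - gradient f a, v⟫ ≤
        ‖gradient f (a + s•v) - gradient f a‖ * ‖v‖ := real_inner_le_norm _ _
    have hlip := hLip (a + s•v) a
    have hns : ‖a + s•v - a‖ = s * ‖v‖ := by
      simp [norm_smul, abs_of_pos hs.1]
    rw [hns] at hlip
    have h0 : ‖gradient f (a + s•v) - gradient f a‖ * ‖v‖ ≤ L * (s*‖v‖) * ‖v‖ :=
      mul_le_mul_of_nonneg_right hlip (norm_nonneg _)
    rw [inner_sub_left] at hcs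
    nlinarith [hcs, h0]
  have hA := hanti (Set.mem_Icc.2 ⟨le_refl 0, zero_le_one⟩)
    (Set.mem_Icc.2 ⟨zero_le_one, le_refl 1⟩) zero_le_one
  have h0 : ψ 0 = f a := by simp [ψ]
  have h1 : ψ 1 = f y - ⟪gradient f a, v⟫ - L/2*‖v‖^2 := by
    simp [ψ, hv]
  rw [h0, h1] at hA
  linarith

lemma pgd_prox_strong (g : E → ℝ) (hg : ConvexOn ℝ Set.univ g) (τ : ℝ) (hτ : 0 < τ)
    (y p : E) (hp : IsMinOn (fun w => g w + ‖w - y‖^2/(2*τ)) Set.univ p) (z : E) :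
    g p * (2*τ) + ‖p - y‖^2 + ‖z - p‖^2 ≤ g z * (2*τ) + ‖z - y‖^2 := by
  have h2τ : (0:ℝ) < 2*τ := by linarith
  have h2τ' : (2*τ) ≠ 0 := ne_of_gt h2τ
  have hmin : ∀ w, g p + ‖p - y‖^2/(2*τ) ≤ g w + ‖w - y‖^2/(2*τ) := by
    intro w
    exact isMinOn_univ_iff.mp hp w
  have key : ∀ l : ℝ, l ∈ Set.Ioo (0:ℝ) 1 →
      g p * (2*τ) + ‖p - y‖^2 + (1-l)*‖z - p‖^2 ≤ g z * (2*τ) + ‖z - y‖^2 := by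
    intro l hl
    set w := (1-l)•p + l•z with hw
    have hmin' : g p * (2*τ) + ‖p - y‖^2 ≤ g w * (2*τ) + ‖w - y‖^2 := by
      have h := mul_le_mul_of_nonneg_right (hmin w) h2τ.le
      have e : ∀ u v : ℝ, (u + v/(2*τ)) * (2*τ) = u*(2*τ) + v := by
        intro u v; field_simp
      rwa [e, e] at h
    have hgw : g w ≤ (1-l)*g p + l*g z :=
      hg.2 (Set.mem_univ p) (Set.mem_univ z) (by linarith [hl.2]) hl.1.le (by ring)
    have hnw : ‖w - y‖^2 = (1-l)*‖p-y‖^2 + l*‖z-y‖^2 - l*(1-l)*‖p-z‖^2 := by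
      have hwy : w - y = (1-l)•(p-y) + l•(z-y) := by
        simp only [hw, smul_sub]
        module
      rw [hwy, pgd_norm_combo]
      congr 3
      abel
    have hgw' := mul_le_mul_of_nonneg_right hgw h2τ.le
    have hzp : ‖z - p‖ = ‖p - z‖ := norm_sub_rev z p
    rw [hzp]
    nlinarith [hmin', hgw', hnw, hl.1, hl.2]
  have htend : Tendsto (fun l : ℝ => g p * (2*τ) + ‖p - y‖^2 + (1-l)*‖z - p‖^2)
      (𝓝[>] (0:ℝ)) (𝓝 (g p * (2*τ) + ‖p - y‖^2 + (1-0)*‖z - p‖^2)) := by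
    apply Tendsto.mono_left _ nhdsWithin_le_nhds
    exact (Continuous.tendsto (by continuity) 0)
  have hev : ∀ᶠ l in 𝓝[>] (0:ℝ),
      g p * (2*τ) + ‖p - y‖^2 + (1-l)*‖z - p‖^2 ≤ g z * (2*τ) + ‖z - y‖^2 := by
    filter_upwards [Ioo_mem_nhdsGT_of_mem (Set.mem_Ico.mpr ⟨le_refl 0, zero_lt_one⟩)] with l hl
    exact key l hl
  have := le_of_tendsto htend hev
  simpa using this

end PGDAux

/-- **Proximal gradient descent with diminishing step sizes.** For convex `f` with
`L`-Lipschitz gradient and convex `g` with `argmin (f+g)` nonempty, step sizes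
`0 < t_k ≤ 1/L` with `Σ t_k = ∞`: the iterates are Fejér monotone with respect to
the solution set (hence bounded), `F(x_k)` is nonincreasing and converges to the
minimal value, and every cluster point is a minimizer. -/
theorem pgd_diminishing_stepsizes (n : ℕ)
    (f g : EuclideanSpace ℝ (Fin n) → ℝ)
    (hfconv : ConvexOn ℝ Set.univ f) (hgconv : ConvexOn ℝ Set.univ g)
    (hfdiff : Differentiable ℝ f) (L : ℝ) (hLpos : 0 < L)
    (hLip : ∀ y z : EuclideanSpace ℝ (Fin n),
      ‖gradient f y - gradient f z‖ ≤ L * ‖y - z‖)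
    (ustar : EuclideanSpace ℝ (Fin n))
    (hustar : ∀ z, f ustar + g ustar ≤ f z + g z)
    (t : ℕ → ℝ) (htpos : ∀ k, 0 < t k) (htle : ∀ k, t k ≤ 1 / L)
    (htdiv : ¬ Summable t)
    (x : ℕ → EuclideanSpace ℝ (Fin n))
    (hx : ∀ k : ℕ, IsMinOn
      (fun z => g z + ‖z - (x k - t k • gradient f (x k))‖ ^ 2 / (2 * t k))
      Set.univ (x (k + 1))) :
    ((∀ (k : ℕ) (u : EuclideanSpace ℝ (Fin n)), (∀ z, f u + g u ≤ f z + g z) →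
        ‖x (k + 1) - u‖ ≤ ‖x k - u‖) ∧ Bornology.IsBounded (Set.range x)) ∧
    ((∀ k, f (x (k + 1)) + g (x (k + 1)) ≤ f (x k) + g (x k)) ∧
      Tendsto (fun k => f (x k) + g (x k)) atTop (𝓝 (f ustar + g ustar))) ∧
    (∀ p, MapClusterPt p atTop x → ∀ z, f p + g p ≤ f z + g z) := by
  -- KEY inequality
  have hKEY : ∀ (k : ℕ) (z : EuclideanSpace ℝ (Fin n)),
      (f (x (k+1)) + g (x (k+1)))*(2*t k) + ‖z - x (k+1)‖^2 ≤
        (f z + g z)*(2*t k) + ‖z - x k‖^2 := by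
    intro k z
    set τ := t k with hτdef
    set X := x k with hX
    set X' := x (k+1) with hX'
    set G := gradient f X with hG
    have hτ : 0 < τ := htpos k
    have h2τ : (0:ℝ) < 2*τ := by linarith
    have hP := pgd_prox_strong g hgconv τ hτ (X - τ•G) X' (hx k) z
    have hE1 : ‖X' - (X - τ•G)‖^2 = ‖X'-X‖^2 + 2*τ*(@inner ℝ _ _ G (X'-X)) + τ^2*‖G‖^2 := by
      rw [show X' - (X - τ•G) = (X'-X) + τ•G by module]
      exact pgd_norm_add_smul _ _ _
    have hE2 : ‖z - (X - τ•G)‖^2 = ‖z-X‖^2 + 2*τ*(@inner ℝ _ _ G (z-X)) + τ^2*‖G‖^2 := by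
      rw [show z - (X - τ•G) = (z-X) + τ•G by module]
      exact pgd_norm_add_smul _ _ _
    rw [hE1, hE2] at hP
    have hdesc := pgd_descent f hfdiff L hLip X X'
    have hgrad := pgd_grad_ineq f hfconv hfdiff X z
    have hdesc' := mul_le_mul_of_nonneg_right hdesc h2τ.le
    have hgrad' := mul_le_mul_of_nonneg_right hgrad h2τ.le
    have hτL : τ * L ≤ 1 := (le_div_iff₀ hLpos).mp (htle k)
    have hLτn : τ * L * ‖X'-X‖^2 ≤ 1 * ‖X'-X‖^2 :=
      mul_le_mul_of_nonneg_right hτL (sq_nonneg _)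
    nlinarith [hP, hdesc', hgrad', hLτn]
  -- Fejér monotonicity
  have hfej : ∀ (k : ℕ) (u : EuclideanSpace ℝ (Fin n)), (∀ z, f u + g u ≤ f z + g z) →
      ‖x (k + 1) - u‖ ≤ ‖x k - u‖ := by
    intro k u hu
    have h := hKEY k u
    have h2 := hu (x (k+1))
    have h2τ : (0:ℝ) < 2*t k := by linarith [htpos k]
    have hsq : ‖u - x (k+1)‖^2 ≤ ‖u - x k‖^2 := by nlinarith [h, h2, h2τ]
    rw [norm_sub_rev u (x (k+1)), norm_sub_rev u (x k)] at hsq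
    exact (pow_le_pow_iff_left₀ (norm_nonneg _) (norm_nonneg _) two_ne_zero).mp hsq
  -- monotone decrease of F
  have hmono : ∀ k, f (x (k + 1)) + g (x (k + 1)) ≤ f (x k) + g (x k) := by
    intro k
    have h := hKEY k (x k)
    have h2τ : (0:ℝ) < 2*t k := by linarith [htpos k]
    simp only [sub_self, norm_zero] at h
    nlinarith [h, sq_nonneg ‖x k - x (k+1)‖, h2τ]
  -- boundedness
  have hbdd0 : ∀ k, ‖x k - ustar‖ ≤ ‖x 0 - ustar‖ := by
    intro k
    induction k with
    | zero => exact le_refl _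
    | succ m ih => exact le_trans (hfej m ustar hustar) ih
  have hbounded : Bornology.IsBounded (Set.range x) := by
    apply (Metric.isBounded_closedBall (x := ustar) (r := ‖x 0 - ustar‖)).subset
    rintro _ ⟨k, rfl⟩
    rw [Metric.mem_closedBall, dist_eq_norm]
    exact hbdd0 k
  -- convergence of F values
  have hge : ∀ k, f ustar + g ustar ≤ f (x k) + g (x k) := fun k => hustar _
  have hanti : Antitone (fun k => f (x k) + g (x k)) := antitone_nat_of_succ_le hmono
  have hbddb : BddBelow (Set.range fun k => f (x k) + g (x k)) :=
    ⟨f ustar + g ustar, by rintro _ ⟨k, rfl⟩; exact hge k⟩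
  have htendc : Tendsto (fun k => f (x k) + g (x k)) atTop
      (𝓝 (⨅ k, f (x k) + g (x k))) := tendsto_atTop_ciInf hanti hbddb
  set c := ⨅ k, f (x k) + g (x k) with hc
  have hcge : f ustar + g ustar ≤ c := le_ciInf hge
  have hcle : c ≤ f ustar + g ustar := by
    by_contra hlt
    push_neg at hlt
    set ε := c - (f ustar + g ustar) with hεdef
    have hεpos : 0 < ε := by simp only [hεdef]; linarith
    have hstep : ∀ k, 2*ε*(t k) ≤ ‖ustar - x k‖^2 - ‖ustar - x (k+1)‖^2 := by
      intro k
      have h := hKEY k ustar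
      have hck : c ≤ f (x (k+1)) + g (x (k+1)) := ciInf_le hbddb (k+1)
      have h2τ : (0:ℝ) < 2*t k := by linarith [htpos k]
      nlinarith [h, hck, h2τ]
    have hsum : ∀ N, ∑ k ∈ Finset.range N, t k ≤ ‖ustar - x 0‖^2 / (2*ε) := by
      intro N
      have h1 : ∑ k ∈ Finset.range N, 2*ε*(t k) ≤
          ∑ k ∈ Finset.range N, (‖ustar - x k‖^2 - ‖ustar - x (k+1)‖^2) :=
        Finset.sum_le_sum (fun k _ => hstep k)
      rw [Finset.sum_range_sub' (fun k => ‖ustar - x k‖^2)] at h1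
      rw [← Finset.mul_sum] at h1
      rw [le_div_iff₀ (by linarith : (0:ℝ) < 2*ε)]
      nlinarith [h1, sq_nonneg ‖ustar - x N‖]
    exact htdiv (summable_of_sum_range_le (fun k => (htpos k).le) hsum)
  have hceq : c = f ustar + g ustar := le_antisymm hcle hcge
  rw [hceq] at htendc
  -- cluster points
  have hgcont : Continuous g := hgconv.locallyLipschitz.continuous
  have hFcont : Continuous (fun z => f z + g z) := (hfdiff.continuous).add hgcont
  refine ⟨⟨hfej, hbounded⟩, ⟨hmono, htendc⟩, ?_⟩
  intro p hp z
  have hclp : MapClusterPt (f p + g p) atTop (fun k => f (x k) + g (x k)) :=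
    hp.continuousAt_comp hFcont.continuousAt
  have hle : map (fun k => f (x k) + g (x k)) atTop ≤ 𝓝 (f ustar + g ustar) := htendc
  have : ClusterPt (f p + g p) (𝓝 (f ustar + g ustar)) := hclp.clusterPt.mono hle
  have heq : f p + g p = f ustar + g ustar := eq_of_nhds_neBot this
  rw [heq]
  exact hustar z
end

section
/- Let f, g : ℝⁿ → ℝ be convex and t > 0, and define the Douglas–Rachford operator T(z) = z + prox_{tg}(2·prox_{tf}(z) − z) − prox_{tf}(z). Then T is firmly nonexpansive: for all z, z' ∈ ℝⁿ, ‖T z − T z'‖² ≤ ⟨T z − T z', z − z'⟩. -/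
open scoped RealInnerProductSpace

private lemma prox_subgrad {E : Type*} [NormedAddCommGroup E] [InnerProductSpace ℝ E]
    (f : E → ℝ) (hf : ConvexOn ℝ Set.univ f) (t : ℝ) (ht : 0 < t)
    (x p : E) (hp : IsMinOn (fun z => f z + ‖z - x‖ ^ 2 / (2 * t)) Set.univ p)
    (z : E) : ⟪x - p, z - p⟫ ≤ t * (f z - f p) := by
  apply le_of_forall_pos_le_add
  intro ε hε
  set c := ‖z - p‖ ^ 2 with hcdef
  have hc : 0 ≤ c := sq_nonneg _
  set lam := min 1 (2 * ε / (c + 1)) with hlamdef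
  have hl0 : 0 < lam := lt_min one_pos (by positivity)
  have hl1 : lam ≤ 1 := min_le_left _ _
  have key := isMinOn_iff.mp hp (p + lam • (z - p)) (Set.mem_univ _)
  have hconv := hf.2 (Set.mem_univ p) (Set.mem_univ z)
    (by linarith : (0:ℝ) ≤ 1 - lam) hl0.le (by ring)
  simp only [smul_eq_mul] at hconv
  have heq : p + lam • (z - p) = (1 - lam) • p + lam • z := by
    rw [smul_sub, sub_smul, one_smul]; abel
  have hnorm : ‖p + lam • (z - p) - x‖ ^ 2
      = ‖p - x‖ ^ 2 + 2 * lam * ⟪p - x, z - p⟫ + lam ^ 2 * c := by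
    have h1 : p + lam • (z - p) - x = (p - x) + lam • (z - p) := by abel
    rw [h1, norm_add_sq_real, real_inner_smul_right, norm_smul, hcdef]
    simp [mul_pow, abs_of_pos hl0]
    ring
  rw [heq] at key
  have key2 : f p + ‖p - x‖ ^ 2 / (2 * t)
      ≤ ((1 - lam) * f p + lam * f z)
        + (‖p - x‖ ^ 2 + 2 * lam * ⟪p - x, z - p⟫ + lam ^ 2 * c) / (2 * t) := by
    calc f p + ‖p - x‖ ^ 2 / (2 * t)
        ≤ f ((1 - lam) • p + lam • z) + ‖(1 - lam) • p + lam • z - x‖ ^ 2 / (2 * t) := key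
      _ ≤ ((1 - lam) * f p + lam * f z) + ‖(1 - lam) • p + lam • z - x‖ ^ 2 / (2 * t) := by
          linarith [hconv]
      _ = ((1 - lam) * f p + lam * f z)
        + (‖p - x‖ ^ 2 + 2 * lam * ⟪p - x, z - p⟫ + lam ^ 2 * c) / (2 * t) := by
          rw [← heq, hnorm]
  have ht' : (0:ℝ) < 2 * t := by linarith
  have hlamc : lam * c ≤ 2 * ε := by
    have hle : lam ≤ 2 * ε / (c + 1) := min_le_right _ _
    have h2 : lam * (c + 1) ≤ 2 * ε := by
      rw [← div_mul_cancel₀ (2 * ε) (show (c:ℝ) + 1 ≠ 0 by positivity)]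
      exact mul_le_mul_of_nonneg_right hle (by positivity)
    nlinarith
  -- multiply key2 out by 2t
  set I := ⟪p - x, z - p⟫ with hIdef
  have key3 : 0 ≤ lam * (f z - f p) * (2 * t) + (2 * lam * I + lam ^ 2 * c) := by
    have h := sub_nonneg.mpr key2
    have hexpand : (((1 - lam) * f p + lam * f z)
          + (‖p - x‖ ^ 2 + 2 * lam * I + lam ^ 2 * c) / (2 * t))
        - (f p + ‖p - x‖ ^ 2 / (2 * t))
        = (lam * (f z - f p) * (2 * t) + (2 * lam * I + lam ^ 2 * c)) / (2 * t) := by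
      field_simp
      ring
    rw [hexpand] at h
    have hX := mul_nonneg h ht'.le
    rwa [div_mul_cancel₀ _ ht'.ne'] at hX
  have hI : ⟪x - p, z - p⟫ = -I := by
    rw [hIdef, show x - p = -(p - x) by abel, inner_neg_left]
  rw [hI]
  nlinarith [key3, hl0, mul_le_mul_of_nonneg_left hlamc hl0.le, mul_pos hl0 hε]

private lemma prox_firm {E : Type*} [NormedAddCommGroup E] [InnerProductSpace ℝ E]
    (f : E → ℝ) (hf : ConvexOn ℝ Set.univ f) (t : ℝ) (ht : 0 < t)
    (P : E → E)
    (hP : ∀ x, IsMinOn (fun z => f z + ‖z - x‖ ^ 2 / (2 * t)) Set.univ (P x))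
    (x y : E) : ‖P x - P y‖ ^ 2 ≤ ⟪P x - P y, x - y⟫ := by
  have h1 := prox_subgrad f hf t ht x (P x) (hP x) (P y)
  have h2 := prox_subgrad f hf t ht y (P y) (hP y) (P x)
  have hsum : ⟪x - P x, P y - P x⟫ + ⟪y - P y, P x - P y⟫ ≤ 0 := by linarith
  have hn : ‖P x - P y‖ ^ 2 = ⟪P x - P y, P x - P y⟫ :=
    (real_inner_self_eq_norm_sq _).symm
  rw [hn]
  simp only [inner_sub_left, inner_sub_right] at hsum ⊢
  linarith [hsum, real_inner_comm x (P x), real_inner_comm x (P y),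
    real_inner_comm y (P x), real_inner_comm y (P y),
    real_inner_comm (P x) (P y)]

/-- **The Douglas–Rachford operator is firmly nonexpansive.** With proximal maps
`P = prox_{tf}` and `Q = prox_{tg}` of convex `f, g` and
`T z = z + Q(2 P z − z) − P z`, we have
`‖T z − T z'‖² ≤ ⟨T z − T z', z − z'⟩` for all `z, z'`. -/
theorem drs_firmly_nonexpansive (n : ℕ)
    (f g : EuclideanSpace ℝ (Fin n) → ℝ)
    (hfconv : ConvexOn ℝ Set.univ f) (hgconv : ConvexOn ℝ Set.univ g)
    (t : ℝ) (ht : 0 < t)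
    (P Q : EuclideanSpace ℝ (Fin n) → EuclideanSpace ℝ (Fin n))
    (hP : ∀ x, IsMinOn (fun z => f z + ‖z - x‖ ^ 2 / (2 * t)) Set.univ (P x))
    (hQ : ∀ x, IsMinOn (fun z => g z + ‖z - x‖ ^ 2 / (2 * t)) Set.univ (Q x))
    (T : EuclideanSpace ℝ (Fin n) → EuclideanSpace ℝ (Fin n))
    (hT : T = fun z => z + Q (2 • P z - z) - P z) :
    ∀ z z' : EuclideanSpace ℝ (Fin n),
      ‖T z - T z'‖ ^ 2 ≤ ⟪T z - T z', z - z'⟫ := by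
  intro z z'
  have hA := prox_firm f hfconv t ht P hP z z'
  have hB := prox_firm g hgconv t ht Q hQ (2 • P z - z) (2 • P z' - z')
  subst hT
  simp only
  set a := P z with ha
  set a' := P z' with ha'
  set b := Q (2 • a - z) with hb
  set b' := Q (2 • a' - z') with hb'
  set d := z - z' with hd
  set A := a - a' with hA2
  set B := b - b' with hB2
  have hTdiff : (z + b - a) - (z' + b' - a') = d + B - A := by
    rw [hd, hA2, hB2]; abel
  have hu : (2 • a - z) - (2 • a' - z') = (2:ℝ) • A - d := by
    rw [hd, hA2]
    simp only [two_smul, smul_sub]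
    abel
  rw [hTdiff]
  rw [hu] at hB
  have h2 : ⟪B, (2:ℝ) • A - d⟫ = 2 * ⟪B, A⟫ - ⟪B, d⟫ := by
    rw [inner_sub_right, real_inner_smul_right]
  rw [h2] at hB
  have hAn : ‖A‖ ^ 2 = ⟪A, A⟫ := (real_inner_self_eq_norm_sq _).symm
  have hBn : ‖B‖ ^ 2 = ⟪B, B⟫ := (real_inner_self_eq_norm_sq _).symm
  rw [hAn] at hA
  rw [hBn] at hB
  have hexp : ‖d + B - A‖ ^ 2 = ⟪d + B - A, d + B - A⟫ :=
    (real_inner_self_eq_norm_sq _).symm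
  rw [hexp]
  simp only [inner_sub_left, inner_add_left, inner_sub_right, inner_add_right]
  linarith [hA, hB, real_inner_comm d A, real_inner_comm d B, real_inner_comm A B]
end

section
/- Let f : ℝⁿ → ℝ be convex and differentiable with L-Lipschitz gradient, g : ℝⁿ → ℝ convex, and suppose argmin (f + g) is nonempty. Let step sizes satisfy 0 < t_k ≤ 1/L, Σ_{k=0}^∞ t_k = ∞, and let δ_k > 0 satisfy Σ_{k=0}^∞ √(n t_k δ_k) < ∞, with the HJ-Prox integrals finite at every iterate. Then the exact-integral HJ-Prox proximal gradient iteration x_{k+1} = prox^{δ_k}_{t_k g}(x_k − t_k ∇f(x_k)) converges to a global minimizer of f + g. -/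
open MeasureTheory Real Filter Topology

set_option maxHeartbeats 2000000

noncomputable section HJPGDaux
namespace HJPGD
variable {n : ℕ}
local notation "E" => EuclideanSpace ℝ (Fin n)

lemma quad_id (a w : E) (θ : ℝ) :
    ‖a + θ • w‖ ^ 2 = (1 - θ) * ‖a‖ ^ 2 + θ * ‖a + w‖ ^ 2 - θ * (1 - θ) * ‖w‖ ^ 2 := by
  have h1 := norm_add_sq_real a (θ • w)
  have h2 := norm_add_sq_real a w
  rw [real_inner_smul_right, norm_smul] at h1
  simp only [Real.norm_eq_abs, mul_pow, sq_abs] at h1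
  linear_combination h1 - θ * h2

lemma xexp_le (x : ℝ) (hx : 0 ≤ x) : x * Real.exp (-x) ≤ Real.exp (-x / 2) := by
  have h1 : x / 4 + 1 ≤ Real.exp (x / 4) := Real.add_one_le_exp _
  have h2 : x ≤ Real.exp (x / 4) ^ 2 := by nlinarith [sq_nonneg (x / 4 - 1), Real.exp_pos (x/4)]
  have h3 : Real.exp (x / 4) ^ 2 = Real.exp (x / 2) := by
    rw [← Real.exp_nat_mul]; congr 1; push_cast; ring
  have h5 : Real.exp (x / 2) * Real.exp (-x) = Real.exp (-x / 2) := by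
    rw [← Real.exp_add]; ring_nf
  nlinarith [Real.exp_pos (-x), Real.exp_pos (-x/2), h2, h3, h5]

lemma gauss_int (c : ℝ) (hc : 0 < c) (p : E) :
    Integrable (fun y : E => Real.exp (-(c * ‖y - p‖ ^ 2))) := by
  have h0 := GaussianFourier.integrable_cexp_neg_mul_sq_norm_add
    (V := EuclideanSpace ℝ (Fin n)) (b := (c : ℂ)) (by simpa using hc) 0 0
  have h1 : Integrable (fun v : E => Real.exp (-(c * ‖v‖ ^ 2))) := by
    refine h0.re.congr (Eventually.of_forall fun v => ?_)
    have h : -(c : ℂ) * (‖v‖ : ℂ) ^ 2 + 0 * ((inner ℝ (0 : E) v : ℝ) : ℂ)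
        = ((-(c * ‖v‖ ^ 2) : ℝ) : ℂ) := by push_cast; ring
    dsimp only
    rw [h, RCLike.re_to_complex, Complex.exp_ofReal_re]
  exact h1.comp_sub_right p

lemma int_pos (f : E → ℝ) (hf : Integrable f) (hpos : ∀ y, 0 < f y) : 0 < ∫ y, f y := by
  rw [integral_pos_iff_support_of_nonneg_ae (Eventually.of_forall fun y => (hpos y).le) hf]
  have h : Function.support f = Set.univ := by
    ext y; simp [Function.support, (hpos y).ne']
  rw [h]
  exact isOpen_univ.measure_pos volume ⟨0, trivial⟩

lemma exists_prox (g : E → ℝ) (hg : ConvexOn ℝ Set.univ g) (hgc : Continuous g)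
    {t : ℝ} (ht : 0 < t) (v : E) :
    ∃ p : E, ∀ z, g p + ‖p - v‖ ^ 2 / (2 * t) + ‖z - p‖ ^ 2 / (2 * t)
      ≤ g z + ‖z - v‖ ^ 2 / (2 * t) := by
  have h2t : (0 : ℝ) < 2 * t := by linarith
  obtain ⟨u₀, hu₀mem, hmin⟩ := (isCompact_closedBall v 1).exists_isMinOn
    (Metric.nonempty_closedBall.2 zero_le_one) hgc.continuousOn
  set C : ℝ := max (g v - g u₀) 0 with hCdef
  have hgv : g u₀ ≤ g v := hmin (Metric.mem_closedBall_self zero_le_one)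
  have hCd : g v - g u₀ ≤ C := le_max_left _ _
  have hC0 : (0 : ℝ) ≤ C := le_max_right _ _
  have hlow : ∀ z, g u₀ - C * ‖z - v‖ ≤ g z := by
    intro z
    rcases le_or_gt ‖z - v‖ 1 with h | h
    · have hz : z ∈ Metric.closedBall v 1 := by
        rwa [Metric.mem_closedBall, dist_eq_norm]
      have h2 : g u₀ ≤ g z := hmin hz
      nlinarith [mul_nonneg hC0 (norm_nonneg (z - v))]
    · set r : ℝ := ‖z - v‖ with hrdef
      have hr0 : (0 : ℝ) < r := lt_trans one_pos h
      set u : E := v + r⁻¹ • (z - v) with hudef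
      have hu : u ∈ Metric.closedBall v 1 := by
        rw [Metric.mem_closedBall, dist_eq_norm]
        have huv : u - v = r⁻¹ • (z - v) := by rw [hudef]; abel
        rw [huv, norm_smul, Real.norm_eq_abs, abs_of_pos (inv_pos.2 hr0), ← hrdef,
          inv_mul_cancel₀ hr0.ne']
      have hcomb : (1 - r⁻¹) • v + r⁻¹ • z = u := by rw [hudef]; module
      have hiv : 0 ≤ 1 - r⁻¹ := by
        have hle : r⁻¹ ≤ 1 := by
          rw [inv_le_one_iff₀]; right; exact h.le
        linarith
      have hconv := hg.2 (Set.mem_univ v) (Set.mem_univ z) hiv (inv_pos.2 hr0).le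
        (by ring : (1 - r⁻¹) + r⁻¹ = 1)
      rw [hcomb] at hconv
      simp only [smul_eq_mul] at hconv
      have hgu : g u₀ ≤ g u := hmin hu
      have hri : r * r⁻¹ = 1 := mul_inv_cancel₀ hr0.ne'
      have hexp : r * ((1 - r⁻¹) * g v + r⁻¹ * g z)
          = r * g v - (r * r⁻¹) * g v + (r * r⁻¹) * g z := by ring
      rw [hri, one_mul] at hexp
      have hmul := mul_le_mul_of_nonneg_left hconv hr0.le
      rw [hexp] at hmul
      have hmul2 := mul_le_mul_of_nonneg_left hgu hr0.le
      have hprod : 0 ≤ (C - (g v - g u₀)) * (r - 1) :=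
        mul_nonneg (by linarith) (by linarith)
      nlinarith [hmul, hmul2, hprod]
  have hφc : Continuous fun z : E => g z + ‖z - v‖ ^ 2 / (2 * t) :=
    hgc.add (((continuous_id.sub continuous_const).norm.pow 2).div_const _)
  have hcoer : Tendsto (fun z : E => g z + ‖z - v‖ ^ 2 / (2 * t))
      (cocompact (EuclideanSpace ℝ (Fin n))) atTop := by
    have h1 : Tendsto (fun z : E => ‖z - v‖) (cocompact (EuclideanSpace ℝ (Fin n))) atTop := by
      refine tendsto_atTop_mono (fun z => ?_)
        (tendsto_atTop_add_const_right _ (-‖v‖) tendsto_norm_cocompact_atTop)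
      have := norm_sub_norm_le z v
      linarith
    have h2 : Tendsto (fun r : ℝ => g u₀ - C * r + r ^ 2 / (2 * t)) atTop atTop := by
      refine tendsto_atTop_mono' atTop ?_ (tendsto_atTop_add_const_right _ (g u₀) tendsto_id)
      filter_upwards [eventually_ge_atTop (2 * t * (C + 1)), eventually_ge_atTop 0] with r hr hr0
      have hmul := mul_le_mul_of_nonneg_right hr hr0
      have hdiv : (C + 1) * r ≤ r ^ 2 / (2 * t) := by
        rw [le_div_iff₀ h2t]; nlinarith
      simp only [id_eq]
      linarith
    refine tendsto_atTop_mono (fun z => ?_) (h2.comp h1)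
    have := hlow z
    simp only [Function.comp]
    have hsq : 0 ≤ ‖z - v‖ ^ 2 / (2 * t) := by positivity
    linarith
  obtain ⟨p, hp⟩ := hφc.exists_forall_le hcoer
  refine ⟨p, fun z => ?_⟩
  have key : ∀ θ : ℝ, 0 < θ → θ < 1 →
      2 * t * g p + ‖p - v‖ ^ 2 + (1 - θ) * ‖z - p‖ ^ 2
        ≤ 2 * t * g z + ‖z - v‖ ^ 2 := by
    intro θ hθ0 hθ1
    have hgpart : g (p + θ • (z - p)) ≤ (1 - θ) * g p + θ * g z := by
      have hcv := hg.2 (Set.mem_univ p) (Set.mem_univ z) (by linarith : (0:ℝ) ≤ 1 - θ) hθ0.le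
        (by ring : (1 - θ) + θ = 1)
      have hpt : (1 - θ) • p + θ • z = p + θ • (z - p) := by module
      rw [hpt] at hcv
      simpa [smul_eq_mul] using hcv
    have hquad := quad_id (p - v) (z - p) θ
    have he2 : p - v + (z - p) = z - v := by abel
    rw [he2] at hquad
    have he1 : p + θ • (z - p) - v = p - v + θ • (z - p) := by abel
    have hmin' := hp (p + θ • (z - p))
    rw [he1, hquad] at hmin'
    have hmin2 : 2 * t * (g p) + ‖p - v‖ ^ 2
        ≤ 2 * t * (g (p + θ • (z - p)))
          + ((1 - θ) * ‖p - v‖ ^ 2 + θ * ‖z - v‖ ^ 2 - θ * (1 - θ) * ‖z - p‖ ^ 2) := by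
      have hmm := mul_le_mul_of_nonneg_left hmin' h2t.le
      have e1 : 2 * t * (g p + ‖p - v‖ ^ 2 / (2 * t)) = 2 * t * g p + ‖p - v‖ ^ 2 := by
        field_simp
      have e2 : 2 * t * (g (p + θ • (z - p))
          + ((1 - θ) * ‖p - v‖ ^ 2 + θ * ‖z - v‖ ^ 2 - θ * (1 - θ) * ‖z - p‖ ^ 2) / (2 * t))
          = 2 * t * g (p + θ • (z - p))
            + ((1 - θ) * ‖p - v‖ ^ 2 + θ * ‖z - v‖ ^ 2 - θ * (1 - θ) * ‖z - p‖ ^ 2) := by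
        field_simp
      rw [e1, e2] at hmm
      exact hmm
    have hg2 : 2 * t * (g (p + θ • (z - p))) ≤ 2 * t * ((1 - θ) * g p + θ * g z) :=
      mul_le_mul_of_nonneg_left hgpart h2t.le
    have hθform : θ * (2 * t * g p + ‖p - v‖ ^ 2 + (1 - θ) * ‖z - p‖ ^ 2)
        ≤ θ * (2 * t * g z + ‖z - v‖ ^ 2) := by nlinarith [hmin2, hg2]
    exact le_of_mul_le_mul_left hθform hθ0
  set Q : ℝ := ‖z - p‖ ^ 2 with hQdef
  have hQ : 0 ≤ Q := by positivity
  have hfinal : 2 * t * g p + ‖p - v‖ ^ 2 + Q ≤ 2 * t * g z + ‖z - v‖ ^ 2 := by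
    refine le_of_forall_pos_le_add fun ε hε => ?_
    set θ : ℝ := min (ε / (Q + 1)) (1 / 2) with hθdef
    have hθ0 : 0 < θ := lt_min (by positivity) (by norm_num)
    have hθ1 : θ < 1 := lt_of_le_of_lt (min_le_right _ _) (by norm_num)
    have hk := key θ hθ0 hθ1
    have h1 : θ ≤ ε / (Q + 1) := min_le_left _ _
    have h2 : θ * Q ≤ ε := by
      have h3 : θ * Q ≤ (ε / (Q + 1)) * Q := mul_le_mul_of_nonneg_right h1 hQ
      have h4 : (ε / (Q + 1)) * Q ≤ ε := by
        rw [div_mul_eq_mul_div, div_le_iff₀ (by linarith : (0:ℝ) < Q + 1)]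
        nlinarith
      linarith
    nlinarith [hk]
  have hdiv := mul_le_mul_of_nonneg_left hfinal (by positivity : (0:ℝ) ≤ (2 * t)⁻¹)
  have e1 : (2 * t)⁻¹ * (2 * t * g p + ‖p - v‖ ^ 2 + Q)
      = g p + ‖p - v‖ ^ 2 / (2 * t) + Q / (2 * t) := by
    field_simp
  have e2 : (2 * t)⁻¹ * (2 * t * g z + ‖z - v‖ ^ 2)
      = g z + ‖z - v‖ ^ 2 / (2 * t) := by
    field_simp
  rw [e1, e2] at hdiv
  simp only [hQdef] at hdiv
  linarith


lemma energy (p : E) (V : E → ℝ) (hVc : Continuous V)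
    (hVnn : ∀ y, 0 ≤ V y)
    (hVconv : ∀ (w : E) (θ : ℝ), 0 < θ → θ ≤ 1 → V (p + θ • w) ≤ θ * V (p + w))
    (hie : Integrable fun y : E => Real.exp (-V y))
    (hid : Integrable fun y : E => Real.exp (-V y / 2)) :
    ∫ y : E, V y * Real.exp (-V y) ≤ n * ∫ y : E, Real.exp (-V y) := by
  have hVVcont : Continuous fun y : E => V y * Real.exp (-V y) :=
    hVc.mul (Real.continuous_exp.comp hVc.neg)
  have hVVint : Integrable fun y : E => V y * Real.exp (-V y) := by
    refine hid.mono' hVVcont.aestronglyMeasurable (Eventually.of_forall fun y => ?_)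
    rw [Real.norm_eq_abs, abs_of_nonneg (mul_nonneg (hVnn y) (Real.exp_pos _).le)]
    exact xexp_le (V y) (hVnn y)
  set Z₁ : ℝ := ∫ y : E, Real.exp (-V y) with hZ₁def
  have hZ₁nn : 0 ≤ Z₁ := integral_nonneg fun y => (Real.exp_pos _).le
  have main : ∀ s : ℝ, 1 < s →
      (∫ y : E, V y * Real.exp (-(s * V y))) ≤ (∑ i ∈ Finset.range n, s ^ i) * Z₁ := by
    intro s hs
    have hs0 : (0 : ℝ) < s := lt_trans one_pos hs
    have hsV_le : ∀ y : E, Real.exp (-(s * V y)) ≤ Real.exp (-V y) := fun y =>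
      Real.exp_le_exp.2 (by nlinarith [hVnn y])
    have hescont : Continuous fun y : E => Real.exp (-(s * V y)) :=
      Real.continuous_exp.comp (continuous_const.mul hVc).neg
    have hes : Integrable fun y : E => Real.exp (-(s * V y)) := by
      refine hie.mono' hescont.aestronglyMeasurable (Eventually.of_forall fun y => ?_)
      rw [Real.norm_eq_abs, abs_of_nonneg (Real.exp_pos _).le]; exact hsV_le y
    have hVes : Integrable fun y : E => V y * Real.exp (-(s * V y)) := by
      refine hVVint.mono' (hVc.mul hescont).aestronglyMeasurable
        (Eventually.of_forall fun y => ?_)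
      rw [Real.norm_eq_abs, abs_of_nonneg (mul_nonneg (hVnn y) (Real.exp_pos _).le)]
      exact mul_le_mul_of_nonneg_left (hsV_le y) (hVnn y)
    have hW : Z₁ ≤ s ^ n * ∫ y : E, Real.exp (-(s * V y)) := by
      have hFint : Integrable fun y : E => Real.exp (-(s * V (p + y))) := hes.comp_add_left p
      have hGint : Integrable fun w : E => Real.exp (-(s * V (p + s⁻¹ • w))) :=
        (integrable_comp_smul_iff volume (fun y : E => Real.exp (-(s * V (p + y))))
          (inv_ne_zero hs0.ne')).2 hFint
      calc Z₁ = ∫ w : E, Real.exp (-V (p + w)) :=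
            (integral_add_left_eq_self (fun y : E => Real.exp (-V y)) p).symm
        _ ≤ ∫ w : E, Real.exp (-(s * V (p + s⁻¹ • w))) := by
            refine integral_mono (hie.comp_add_left p) hGint fun w => ?_
            apply Real.exp_le_exp.2
            have h := hVconv w s⁻¹ (inv_pos.2 hs0) (by
              rw [inv_le_one_iff₀]; right; exact hs.le)
            have : s * V (p + s⁻¹ • w) ≤ V (p + w) := by
              have hmul := mul_le_mul_of_nonneg_left h hs0.le
              rwa [← mul_assoc, mul_inv_cancel₀ hs0.ne', one_mul] at hmul
            linarith
        _ = |s ^ Module.finrank ℝ (EuclideanSpace ℝ (Fin n))| •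
              ∫ y : E, Real.exp (-(s * V (p + y))) :=
            Measure.integral_comp_inv_smul volume
              (fun y : E => Real.exp (-(s * V (p + y)))) s
        _ = s ^ n * ∫ y : E, Real.exp (-(s * V y)) := by
            rw [finrank_euclideanSpace_fin, abs_of_pos (pow_pos hs0 n), smul_eq_mul,
              integral_add_left_eq_self (fun y : E => Real.exp (-(s * V y))) p]
    have hWle : (∫ y : E, Real.exp (-(s * V y))) ≤ Z₁ := integral_mono hes hie hsV_le
    have hdiff : (s - 1) * ∫ y : E, V y * Real.exp (-(s * V y)) ≤ (s ^ n - 1) * Z₁ := by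
      have hpt : ∀ y : E, (s - 1) * (V y * Real.exp (-(s * V y)))
          ≤ Real.exp (-V y) - Real.exp (-(s * V y)) := by
        intro y
        have h1 : (s - 1) * V y + 1 ≤ Real.exp ((s - 1) * V y) := Real.add_one_le_exp _
        have h2 : Real.exp ((s - 1) * V y) * Real.exp (-(s * V y)) = Real.exp (-V y) := by
          rw [← Real.exp_add]; ring_nf
        nlinarith [Real.exp_pos (-(s * V y))]
      have hsn1 : (0 : ℝ) ≤ s ^ n - 1 := by
        have := one_le_pow₀ hs.le (n := n)
        linarith
      calc (s - 1) * ∫ y : E, V y * Real.exp (-(s * V y))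
          = ∫ y : E, (s - 1) * (V y * Real.exp (-(s * V y))) := (integral_const_mul _ _).symm
        _ ≤ ∫ y : E, (Real.exp (-V y) - Real.exp (-(s * V y))) :=
            integral_mono (hVes.const_mul _) (hie.sub hes) hpt
        _ = Z₁ - ∫ y : E, Real.exp (-(s * V y)) := integral_sub hie hes
        _ ≤ (s ^ n - 1) * Z₁ := by nlinarith [hW, hWle, hsn1]
    have hgeo : (s ^ n - 1) = (s - 1) * ∑ i ∈ Finset.range n, s ^ i := by
      have h := geom_sum_mul s n
      linarith [h]
    rw [hgeo, mul_assoc] at hdiff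
    have hs1' : (0 : ℝ) < s - 1 := by linarith
    exact le_of_mul_le_mul_left hdiff hs1'
  set sseq : ℕ → ℝ := fun m => 1 + ((m : ℝ) + 1)⁻¹ with hsseqdef
  have hsgt : ∀ m, 1 < sseq m := by
    intro m
    have : (0 : ℝ) < ((m : ℝ) + 1)⁻¹ := by positivity
    simp only [hsseqdef]; linarith
  have hstend : Tendsto sseq atTop (𝓝 1) := by
    have h := tendsto_one_div_add_atTop_nhds_zero_nat (𝕜 := ℝ)
    have : Tendsto (fun m : ℕ => 1 + 1 / ((m : ℝ) + 1)) atTop (𝓝 (1 + 0)) :=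
      tendsto_const_nhds.add h
    simpa [hsseqdef, one_div] using this
  have hL : Tendsto (fun m => ∫ y : E, V y * Real.exp (-(sseq m * V y))) atTop
      (𝓝 (∫ y : E, V y * Real.exp (-V y))) := by
    refine tendsto_integral_of_dominated_convergence (fun y => V y * Real.exp (-V y))
      (fun m => (hVc.mul (Real.continuous_exp.comp
        (continuous_const.mul hVc).neg)).aestronglyMeasurable)
      hVVint (fun m => Eventually.of_forall fun y => ?_) (Eventually.of_forall fun y => ?_)
    · rw [Real.norm_eq_abs, abs_of_nonneg (mul_nonneg (hVnn y) (Real.exp_pos _).le)]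
      refine mul_le_mul_of_nonneg_left (Real.exp_le_exp.2 ?_) (hVnn y)
      have := hsgt m
      nlinarith [hVnn y]
    · have hcont : Continuous fun s : ℝ => V y * Real.exp (-(s * V y)) := by
        exact continuous_const.mul (Real.continuous_exp.comp
          ((continuous_id.mul continuous_const).neg))
      have := (hcont.tendsto 1).comp hstend
      simpa [Function.comp_def] using this
  have hR : Tendsto (fun m => (∑ i ∈ Finset.range n, sseq m ^ i) * Z₁) atTop
      (𝓝 ((n : ℝ) * Z₁)) := by
    have h1 : Tendsto (fun m => ∑ i ∈ Finset.range n, sseq m ^ i) atTop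
        (𝓝 (∑ i ∈ Finset.range n, (1 : ℝ) ^ i)) :=
      tendsto_finset_sum _ fun i _ => hstend.pow i
    simp only [one_pow, Finset.sum_const, Finset.card_range, nsmul_eq_mul, mul_one] at h1
    exact h1.mul_const Z₁
  exact le_of_tendsto_of_tendsto' hL hR fun m => main (sseq m) (hsgt m)


/-- The HJ-prox error bound with constant √(2ntδ). -/
lemma hj_err (g : E → ℝ) (hg : ConvexOn ℝ Set.univ g) (hgc : Continuous g)
    {t d : ℝ} (ht : 0 < t) (hd : 0 < d) (v : E)
    (p : E)
    (hp : ∀ z, g p + ‖p - v‖ ^ 2 / (2 * t) + ‖z - p‖ ^ 2 / (2 * t)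
      ≤ g z + ‖z - v‖ ^ 2 / (2 * t))
    (h1 : Integrable fun z : E => Real.exp (-(g z + ‖z - v‖ ^ 2 / (2 * t)) / d))
    (h2 : Integrable fun z : E => Real.exp (-(g z + ‖z - v‖ ^ 2 / (2 * t)) / d) • z) :
    ‖(∫ z : E, Real.exp (-(g z + ‖z - v‖ ^ 2 / (2 * t)) / d))⁻¹ •
        (∫ z : E, Real.exp (-(g z + ‖z - v‖ ^ 2 / (2 * t)) / d) • z) - p‖
      ≤ Real.sqrt (2 * n * t * d) := by
  set h : E → ℝ := fun z => Real.exp (-(g z + ‖z - v‖ ^ 2 / (2 * t)) / d) with hhdef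
  set V : E → ℝ := fun z => (g z + ‖z - v‖ ^ 2 / (2 * t) - (g p + ‖p - v‖ ^ 2 / (2 * t))) / d
    with hVdef
  have hdne : d ≠ 0 := hd.ne'
  have hK : ∀ z, h z = Real.exp (-(g p + ‖p - v‖ ^ 2 / (2 * t)) / d) * Real.exp (-V z) := by
    intro z
    simp only [hhdef, hVdef]
    rw [← Real.exp_add]
    congr 1
    field_simp
    ring
  set K : ℝ := Real.exp (-(g p + ‖p - v‖ ^ 2 / (2 * t)) / d) with hKdef
  have hKpos : 0 < K := Real.exp_pos _
  have hVq : ∀ z, ‖z - p‖ ^ 2 / (2 * t * d) ≤ V z := by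
    intro z
    have hz := hp z
    simp only [hVdef]
    rw [le_div_iff₀ hd]
    have he : ‖z - p‖ ^ 2 / (2 * t * d) * d = ‖z - p‖ ^ 2 / (2 * t) := by
      field_simp
    rw [he]
    linarith
  have hVnn : ∀ z, 0 ≤ V z := fun z =>
    le_trans (by positivity) (hVq z)
  have hVc : Continuous V :=
    ((hgc.add (((continuous_id.sub continuous_const).norm.pow 2).div_const _)).sub
      continuous_const).div_const _
  have hhc : Continuous h := Real.continuous_exp.comp
    ((hgc.add (((continuous_id.sub continuous_const).norm.pow 2).div_const _)).neg.div_const _)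
  have hVconv : ∀ (w : E) (θ : ℝ), 0 < θ → θ ≤ 1 → V (p + θ • w) ≤ θ * V (p + w) := by
    intro w θ hθ0 hθ1
    have hgpart : g (p + θ • w) ≤ (1 - θ) * g p + θ * g (p + w) := by
      have hcv := hg.2 (Set.mem_univ p) (Set.mem_univ (p + w)) (by linarith : (0:ℝ) ≤ 1 - θ)
        hθ0.le (by ring : (1 - θ) + θ = 1)
      have hpt : (1 - θ) • p + θ • (p + w) = p + θ • w := by module
      rw [hpt] at hcv
      simpa [smul_eq_mul] using hcv
    have hquad := quad_id (p - v) w θ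
    have he1 : p + θ • w - v = p - v + θ • w := by abel
    have he2 : p + w - v = p - v + w := by abel
    simp only [hVdef]
    rw [he1, he2, hquad, div_le_iff₀ hd]
    have hcancel : θ * ((g (p + w) + ‖p - v + w‖ ^ 2 / (2 * t)
        - (g p + ‖p - v‖ ^ 2 / (2 * t))) / d) * d
        = θ * (g (p + w) + ‖p - v + w‖ ^ 2 / (2 * t) - (g p + ‖p - v‖ ^ 2 / (2 * t))) := by
      field_simp
    rw [hcancel]
    have hθq : 0 ≤ θ * (1 - θ) * ‖w‖ ^ 2 / (2 * t) :=
      div_nonneg (mul_nonneg (mul_nonneg hθ0.le (by linarith)) (sq_nonneg _)) (by linarith)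
    have hquot : ((1 - θ) * ‖p - v‖ ^ 2 + θ * ‖p - v + w‖ ^ 2
        - θ * (1 - θ) * ‖w‖ ^ 2) / (2 * t)
        = (1 - θ) * (‖p - v‖ ^ 2 / (2 * t)) + θ * (‖p - v + w‖ ^ 2 / (2 * t))
          - θ * (1 - θ) * ‖w‖ ^ 2 / (2 * t) := by ring
    rw [hquot]
    nlinarith [hgpart, hθq]
  have hie : Integrable fun z : E => Real.exp (-V z) := by
    have hKm := h1.const_mul K⁻¹
    refine hKm.congr (Eventually.of_forall fun z => ?_)
    show K⁻¹ * h z = Real.exp (-V z)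
    rw [hK z, ← mul_assoc, inv_mul_cancel₀ hKpos.ne', one_mul]
  have hid : Integrable fun z : E => Real.exp (-V z / 2) := by
    have h4td : (0:ℝ) < 4 * t * d := by nlinarith
    refine (gauss_int (1 / (4 * t * d)) (one_div_pos.mpr h4td) p).mono'
      ((Real.continuous_exp.comp (hVc.neg.div_const _)).aestronglyMeasurable)
      (Eventually.of_forall fun z => ?_)
    rw [Real.norm_eq_abs, abs_of_nonneg (Real.exp_pos _).le]
    apply Real.exp_le_exp.2
    have hq := hVq z
    have he : ‖z - p‖ ^ 2 / (2 * t * d) / 2 = 1 / (4 * t * d) * ‖z - p‖ ^ 2 := by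
      rw [div_div, one_div, inv_mul_eq_div]
      congr 1
      ring
    linarith [hq, he.le, he.ge]
  have hhpos : ∀ z, 0 < h z := fun z => by
    simp only [hhdef]; exact Real.exp_pos _
  -- energy bound
  have hEV := energy p V hVc hVnn hVconv hie hid
  -- Z > 0
  have hZpos : 0 < ∫ z : E, h z := int_pos h h1 fun z => Real.exp_pos _
  set Z : ℝ := ∫ z : E, h z with hZdef
  -- integrability of h·V, h·‖z-p‖², h·‖z-p‖
  have hVe_int : Integrable fun z : E => V z * Real.exp (-V z) := by
    refine hid.mono' ((hVc.mul (Real.continuous_exp.comp hVc.neg)).aestronglyMeasurable)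
      (Eventually.of_forall fun z => ?_)
    rw [Real.norm_eq_abs, abs_of_nonneg (mul_nonneg (hVnn z) (Real.exp_pos _).le)]
    exact xexp_le (V z) (hVnn z)
  have hhV_int : Integrable fun z : E => h z * V z := by
    have hKV := hVe_int.const_mul K
    refine hKV.congr (Eventually.of_forall fun z => ?_)
    show K * (V z * Real.exp (-V z)) = h z * V z
    rw [hK z]; ring
  have hhV_eq : ∫ z : E, h z * V z ≤ n * Z := by
    have he1 : (∫ z : E, h z * V z) = K * ∫ z : E, V z * Real.exp (-V z) := by
      rw [← integral_const_mul]
      refine integral_congr_ae (Eventually.of_forall fun z => ?_)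
      show h z * V z = K * (V z * Real.exp (-V z))
      rw [hK z]; ring
    have he2 : Z = K * ∫ z : E, Real.exp (-V z) := by
      rw [hZdef, ← integral_const_mul]
      refine integral_congr_ae (Eventually.of_forall fun z => ?_)
      show h z = K * Real.exp (-V z)
      exact hK z
    rw [he1, he2]
    calc K * ∫ z : E, V z * Real.exp (-V z) ≤ K * (n * ∫ z : E, Real.exp (-V z)) :=
          mul_le_mul_of_nonneg_left hEV hKpos.le
      _ = n * (K * ∫ z : E, Real.exp (-V z)) := by ring
  have hsq_int : Integrable fun z : E => h z * ‖z - p‖ ^ 2 := by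
    refine (hhV_int.const_mul (2 * t * d)).mono'
      ((hhc.mul ((continuous_id.sub continuous_const).norm.pow 2)).aestronglyMeasurable)
      (Eventually.of_forall fun z => ?_)
    rw [Real.norm_eq_abs, abs_of_nonneg (mul_nonneg (hhpos z).le (by positivity))]
    have hq := hVq z
    have hhz : 0 < h z := Real.exp_pos _
    rw [div_le_iff₀ (by positivity : (0:ℝ) < 2 * t * d)] at hq
    calc h z * ‖z - p‖ ^ 2 ≤ h z * (V z * (2 * t * d)) :=
          mul_le_mul_of_nonneg_left hq hhz.le
      _ = 2 * t * d * (h z * V z) := by ring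
  have hB : (∫ z : E, h z * ‖z - p‖ ^ 2) ≤ 2 * n * t * d * Z := by
    have hle : (∫ z : E, h z * ‖z - p‖ ^ 2) ≤ ∫ z : E, 2 * t * d * (h z * V z) := by
      refine integral_mono hsq_int (hhV_int.const_mul _) fun z => ?_
      have hq := hVq z
      have hhz : 0 < h z := hhpos z
      rw [div_le_iff₀ (by positivity : (0:ℝ) < 2 * t * d)] at hq
      calc h z * ‖z - p‖ ^ 2 ≤ h z * (V z * (2 * t * d)) :=
            mul_le_mul_of_nonneg_left hq hhz.le
        _ = 2 * t * d * (h z * V z) := by ring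
    rw [integral_const_mul] at hle
    calc (∫ z : E, h z * ‖z - p‖ ^ 2) ≤ 2 * t * d * ∫ z : E, h z * V z := hle
      _ ≤ 2 * t * d * (n * Z) := mul_le_mul_of_nonneg_left hhV_eq (by positivity)
      _ = 2 * n * t * d * Z := by ring
  have habs_int : Integrable fun z : E => h z * ‖z - p‖ := by
    refine (h1.add hsq_int).mono'
      ((hhc.mul (continuous_id.sub continuous_const).norm).aestronglyMeasurable)
      (Eventually.of_forall fun z => ?_)
    rw [Real.norm_eq_abs, abs_of_nonneg (mul_nonneg (hhpos z).le (norm_nonneg _))]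
    have hhz : 0 < h z := hhpos z
    have : ‖z - p‖ ≤ 1 + ‖z - p‖ ^ 2 := by nlinarith [sq_nonneg (‖z - p‖ - 1)]
    calc h z * ‖z - p‖ ≤ h z * (1 + ‖z - p‖ ^ 2) := mul_le_mul_of_nonneg_left this hhz.le
      _ = h z + h z * ‖z - p‖ ^ 2 := by ring
  set A : ℝ := ∫ z : E, h z * ‖z - p‖ with hAdef
  set B : ℝ := ∫ z : E, h z * ‖z - p‖ ^ 2 with hBdef
  have hAnn : 0 ≤ A := integral_nonneg fun z => mul_nonneg (hhpos z).le (norm_nonneg _)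
  have hBnn : 0 ≤ B := integral_nonneg fun z => mul_nonneg (hhpos z).le (by positivity)
  -- Cauchy-Schwarz : A² ≤ Z B
  have hCS : A ^ 2 ≤ Z * B := by
    have hnn : 0 ≤ ∫ z : E, h z * (Z * ‖z - p‖ - A) ^ 2 :=
      integral_nonneg fun z => mul_nonneg (hhpos z).le (sq_nonneg _)
    have hexpand : ∀ z : E, h z * (Z * ‖z - p‖ - A) ^ 2
        = Z ^ 2 * (h z * ‖z - p‖ ^ 2) - 2 * Z * A * (h z * ‖z - p‖) + A ^ 2 * h z := by
      intro z; ring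
    have i1 : Integrable fun z : E => Z ^ 2 * (h z * ‖z - p‖ ^ 2) := hsq_int.const_mul _
    have i2 : Integrable fun z : E => 2 * Z * A * (h z * ‖z - p‖) := habs_int.const_mul _
    have i3 : Integrable fun z : E => A ^ 2 * h z := h1.const_mul _
    have i12 : Integrable fun z : E =>
        Z ^ 2 * (h z * ‖z - p‖ ^ 2) - 2 * Z * A * (h z * ‖z - p‖) := i1.sub i2
    have hint : (∫ z : E, h z * (Z * ‖z - p‖ - A) ^ 2)
        = Z ^ 2 * B - 2 * Z * A * A + A ^ 2 * Z := by
      rw [integral_congr_ae (Eventually.of_forall hexpand)]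
      rw [integral_add i12 i3]
      rw [integral_sub i1 i2]
      rw [integral_const_mul, integral_const_mul, integral_const_mul]
    rw [hint] at hnn
    nlinarith [hZpos, hnn]
  -- assemble
  have hmean : (∫ z : E, h z • z) - Z • p = ∫ z : E, h z • (z - p) := by
    rw [eq_comm]
    have : ∀ z : E, h z • (z - p) = h z • z - h z • p := fun z => smul_sub _ _ _
    rw [integral_congr_ae (Eventually.of_forall this), integral_sub h2 (h1.smul_const p),
      integral_smul_const]
  have hnorm1 : ‖∫ z : E, h z • (z - p)‖ ≤ A := by
    refine le_trans (norm_integral_le_integral_norm _) (le_of_eq ?_)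
    rw [hAdef]
    refine integral_congr_ae (Eventually.of_forall fun z => ?_)
    show ‖h z • (z - p)‖ = h z * ‖z - p‖
    rw [norm_smul, Real.norm_eq_abs, abs_of_nonneg (hhpos z).le]
  have hA_le : A ≤ Real.sqrt (2 * n * t * d) * Z := by
    have h1' : A ^ 2 ≤ (2 * n * t * d) * Z ^ 2 := by nlinarith [hB, hCS, hZpos]
    have h2' : Real.sqrt (A ^ 2) ≤ Real.sqrt ((2 * n * t * d) * Z ^ 2) :=
      Real.sqrt_le_sqrt h1'
    rw [Real.sqrt_sq hAnn, Real.sqrt_mul (by positivity), Real.sqrt_sq hZpos.le] at h2'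
    exact h2'
  have hfinal : ‖(∫ z : E, h z)⁻¹ • (∫ z : E, h z • z) - p‖ ≤ Real.sqrt (2 * n * t * d) := by
    have hps : (∫ z : E, h z)⁻¹ • (∫ z : E, h z • z) - p
        = (∫ z : E, h z)⁻¹ • ((∫ z : E, h z • z) - Z • p) := by
      rw [smul_sub, ← hZdef, smul_smul, inv_mul_cancel₀ hZpos.ne', one_smul]
    rw [hps, hmean, norm_smul, Real.norm_eq_abs, ← hZdef,
      abs_of_pos (inv_pos.2 hZpos)]
    calc Z⁻¹ * ‖∫ z : E, h z • (z - p)‖ ≤ Z⁻¹ * A :=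
          mul_le_mul_of_nonneg_left hnorm1 (inv_pos.2 hZpos).le
      _ ≤ Z⁻¹ * (Real.sqrt (2 * n * t * d) * Z) :=
          mul_le_mul_of_nonneg_left hA_le (inv_pos.2 hZpos).le
      _ = Real.sqrt (2 * n * t * d) := by field_simp
  exact hfinal


lemma line_deriv (f : E → ℝ) (hd : Differentiable ℝ f) (x d : E) (τ : ℝ) :
    HasDerivAt (fun s : ℝ => f (x + s • d))
      (inner ℝ (gradient f (x + τ • d)) d : ℝ) τ := by
  have h1 : HasDerivAt (fun s : ℝ => x + s • d) d τ := by
    simpa using ((hasDerivAt_id τ).smul_const d).const_add x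
  have hg := (hd (x + τ • d)).hasGradientAt
  have h2 := hg.hasFDerivAt.comp_hasDerivAt τ h1
  simpa [InnerProductSpace.toDual, Function.comp_def] using h2

lemma grad_ineq (f : E → ℝ) (hf : ConvexOn ℝ Set.univ f) (hd : Differentiable ℝ f) (x z : E) :
    f x + inner ℝ (gradient f x) (z - x) ≤ f z := by
  have hconv1 : ConvexOn ℝ Set.univ (fun τ : ℝ => f (x + τ • (z - x))) := by
    have h := hf.comp_affineMap (AffineMap.lineMap x z)
    have heq : (fun τ : ℝ => f (x + τ • (z - x))) = f ∘ (AffineMap.lineMap x z) := by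
      funext τ
      simp only [Function.comp_apply, AffineMap.lineMap_apply]
      congr 1
      simp [vsub_eq_sub, vadd_eq_add]
      abel
    rw [heq]
    simpa using h
  have hs := hconv1.le_slope_of_hasDerivAt (Set.mem_univ (0:ℝ)) (Set.mem_univ (1:ℝ)) one_pos
    (line_deriv f hd x (z - x) 0)
  rw [slope_def_field] at hs
  have h0 : x + (0:ℝ) • (z - x) = x := by simp
  have h1 : x + (1:ℝ) • (z - x) = z := by simp
  rw [h0] at hs
  simp only [h1, h0] at hs
  have h2 : (f z - f x) / ((1:ℝ) - 0) = f z - f x := by norm_num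
  rw [h2] at hs
  linarith

lemma grad_cont (f : E → ℝ) (L : ℝ) (hL : 0 ≤ L)
    (hLip : ∀ y z : E, ‖gradient f y - gradient f z‖ ≤ L * ‖y - z‖) :
    Continuous (fun y : E => gradient f y) := by
  have h : LipschitzWith (Real.toNNReal L) (gradient f) := by
    apply LipschitzWith.of_dist_le_mul
    intro a b
    rw [dist_eq_norm, dist_eq_norm]
    calc ‖gradient f a - gradient f b‖ ≤ L * ‖a - b‖ := hLip a b
      _ = Real.toNNReal L * ‖a - b‖ := by rw [Real.coe_toNNReal L hL]
  exact h.continuous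

lemma descent (f : E → ℝ) (hd : Differentiable ℝ f) (L : ℝ) (hL : 0 ≤ L)
    (hLip : ∀ y z : E, ‖gradient f y - gradient f z‖ ≤ L * ‖y - z‖)
    (x z : E) :
    f z ≤ f x + inner ℝ (gradient f x) (z - x) + L / 2 * ‖z - x‖ ^ 2 := by
  have hgc := grad_cont f L hL hLip
  set d : E := z - x with hddef
  have hcont : Continuous fun τ : ℝ => (inner ℝ (gradient f (x + τ • d)) d : ℝ) := by
    apply Continuous.inner
    · exact hgc.comp (continuous_const.add (continuous_id.smul continuous_const))
    · exact continuous_const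
  have hFTC : f (x + (1:ℝ) • d) - f (x + (0:ℝ) • d)
      = ∫ τ in (0:ℝ)..1, (inner ℝ (gradient f (x + τ • d)) d : ℝ) :=
    (intervalIntegral.integral_eq_sub_of_hasDerivAt
      (fun τ _ => line_deriv f hd x d τ) (hcont.intervalIntegrable 0 1)).symm
  have hbound : ∀ τ ∈ Set.Icc (0:ℝ) 1, (inner ℝ (gradient f (x + τ • d)) d : ℝ)
      ≤ inner ℝ (gradient f x) d + L * τ * ‖d‖ ^ 2 := by
    intro τ hτ
    have h1 : (inner ℝ (gradient f (x + τ • d)) d : ℝ) - inner ℝ (gradient f x) d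
        = inner ℝ (gradient f (x + τ • d) - gradient f x) d := by
      rw [inner_sub_left]
    have h2 : (inner ℝ (gradient f (x + τ • d) - gradient f x) d : ℝ)
        ≤ ‖gradient f (x + τ • d) - gradient f x‖ * ‖d‖ := real_inner_le_norm _ _
    have h3 : ‖gradient f (x + τ • d) - gradient f x‖ ≤ L * ‖τ • d‖ := by
      have := hLip (x + τ • d) x
      simpa using this
    have h4 : ‖τ • d‖ = τ * ‖d‖ := by
      rw [norm_smul, Real.norm_eq_abs, abs_of_nonneg hτ.1]
    rw [h4] at h3
    nlinarith [norm_nonneg d, norm_nonneg (gradient f (x + τ • d) - gradient f x)]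
  have hint : (∫ τ in (0:ℝ)..1, (inner ℝ (gradient f (x + τ • d)) d : ℝ))
      ≤ ∫ τ in (0:ℝ)..1, (inner ℝ (gradient f x) d + L * τ * ‖d‖ ^ 2 : ℝ) := by
    apply intervalIntegral.integral_mono_on zero_le_one (hcont.intervalIntegrable 0 1)
    · exact (continuous_const.add ((continuous_const.mul continuous_id).mul
        continuous_const)).intervalIntegrable 0 1
    · exact hbound
  have hval : (∫ τ in (0:ℝ)..1, (inner ℝ (gradient f x) d + L * τ * ‖d‖ ^ 2 : ℝ))
      = inner ℝ (gradient f x) d + L / 2 * ‖d‖ ^ 2 := by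
    have heq : (fun τ : ℝ => (inner ℝ (gradient f x) d + L * τ * ‖d‖ ^ 2 : ℝ))
        = fun τ : ℝ => (inner ℝ (gradient f x) d : ℝ) + (L * ‖d‖ ^ 2) * τ := by
      funext τ; ring
    have h2 : (∫ τ in (0:ℝ)..1, (L * ‖d‖ ^ 2) * τ) = L / 2 * ‖d‖ ^ 2 := by
      rw [intervalIntegral.integral_const_mul, integral_id]
      ring
    rw [heq, intervalIntegral.integral_add intervalIntegrable_const
      ((by fun_prop : Continuous fun τ : ℝ => (L * ‖d‖ ^ 2) * τ).intervalIntegrable 0 1), h2,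
      intervalIntegral.integral_const]
    simp
  have h0 : x + (0:ℝ) • d = x := by simp
  have h1 : x + (1:ℝ) • d = z := by simp [hddef]
  rw [h0, h1] at hFTC
  linarith [hFTC, hint, hval]

lemma div_clear {τ a b c a' b' : ℝ} (hτ : 0 < τ) (h : a + b / τ + c / τ ≤ a' + b' / τ) :
    τ * a + b + c ≤ τ * a' + b' := by
  have h2 := mul_le_mul_of_nonneg_left h hτ.le
  have e1 : τ * (a + b / τ + c / τ) = τ * a + b + c := by field_simp
  have e2 : τ * (a' + b' / τ) = τ * a' + b' := by field_simp
  rw [e1, e2] at h2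
  exact h2

lemma onestep (f g : E → ℝ) (hf : ConvexOn ℝ Set.univ f) (hd : Differentiable ℝ f)
    (L : ℝ) (hL : 0 < L)
    (hLip : ∀ y z : E, ‖gradient f y - gradient f z‖ ≤ L * ‖y - z‖)
    {t : ℝ} (ht : 0 < t) (htL : t ≤ 1 / L)
    (x u p : E)
    (hp : ∀ z, g p + ‖p - (x - t • gradient f x)‖ ^ 2 / (2 * t)
        + ‖z - p‖ ^ 2 / (2 * t) ≤ g z + ‖z - (x - t • gradient f x)‖ ^ 2 / (2 * t)) :
    f p + g p ≤ f u + g u + (‖x - u‖ ^ 2 - ‖p - u‖ ^ 2) / (2 * t) := by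
  have h2t : (0:ℝ) < 2 * t := by linarith
  set G : E := gradient f x with hGdef
  have hdes := descent f hd L hL.le hLip x p
  have hgrad := grad_ineq f hf hd x u
  have hpu := hp u
  have he1 : p - (x - t • G) = (p - x) + t • G := by abel
  have he2 : u - (x - t • G) = (u - x) + t • G := by abel
  rw [he1, he2] at hpu
  have hpu2 := div_clear h2t hpu
  have hq1 := norm_add_sq_real (p - x) (t • G)
  have hq2 := norm_add_sq_real (u - x) (t • G)
  rw [real_inner_smul_right] at hq1 hq2
  have hc1 : (inner ℝ (p - x) G : ℝ) = inner ℝ G (p - x) := real_inner_comm _ _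
  have hc2 : (inner ℝ (u - x) G : ℝ) = inner ℝ G (u - x) := real_inner_comm _ _
  rw [hc1] at hq1
  rw [hc2] at hq2
  have hsm : ‖t • G‖ ^ 2 = t ^ 2 * ‖G‖ ^ 2 := by
    rw [norm_smul, Real.norm_eq_abs, mul_pow, sq_abs]
  rw [hsm] at hq1 hq2
  rw [hq1, hq2] at hpu2
  have hdes2 := mul_le_mul_of_nonneg_left hdes h2t.le
  have hgrad2 := mul_le_mul_of_nonneg_left hgrad h2t.le
  have htL2 : t * L ≤ 1 := by
    rw [le_div_iff₀ hL] at htL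
    linarith
  have hLprod : t * L * ‖p - x‖ ^ 2 ≤ ‖p - x‖ ^ 2 := by
    nlinarith [sq_nonneg ‖p - x‖, htL2]
  have hrev : ‖x - u‖ = ‖u - x‖ := norm_sub_rev x u
  have hrev2 : ‖p - u‖ = ‖u - p‖ := norm_sub_rev p u
  rw [hrev, hrev2, add_comm (f u + g u), ← sub_le_iff_le_add, le_div_iff₀ h2t]
  nlinarith [hdes2, hgrad2, hpu2, hLprod]


end HJPGD
end HJPGDaux

open HJPGD

/-- **Convergence of the exact-integral HJ-Prox proximal gradient method.** For
convex `f` with `L`-Lipschitz gradient and convex `g` with `argmin (f+g)`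
nonempty, step sizes `0 < t_k ≤ 1/L` with `Σ t_k = ∞`, and smoothing parameters
`δ_k > 0` with `Σ √(n t_k δ_k) < ∞`, the iteration
`x_{k+1} = prox^{δ_k}_{t_k g}(x_k − t_k ∇f(x_k))` (with exactly evaluated
integrals) converges to a global minimizer of `f + g`. -/
theorem hj_pgd_convergence (n : ℕ)
    (f g : EuclideanSpace ℝ (Fin n) → ℝ)
    (hfconv : ConvexOn ℝ Set.univ f) (hgconv : ConvexOn ℝ Set.univ g)
    (hfdiff : Differentiable ℝ f) (L : ℝ) (hLpos : 0 < L)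
    (hLip : ∀ y z : EuclideanSpace ℝ (Fin n),
      ‖gradient f y - gradient f z‖ ≤ L * ‖y - z‖)
    (ustar : EuclideanSpace ℝ (Fin n))
    (hustar : ∀ z, f ustar + g ustar ≤ f z + g z)
    (t δ : ℕ → ℝ) (htpos : ∀ k, 0 < t k) (htle : ∀ k, t k ≤ 1 / L)
    (htdiv : ¬ Summable t) (hδpos : ∀ k, 0 < δ k)
    (hsum : Summable fun k => Real.sqrt (n * t k * δ k))
    (x : ℕ → EuclideanSpace ℝ (Fin n))
    (hint1 : ∀ k : ℕ, Integrable (fun z : EuclideanSpace ℝ (Fin n) =>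
      Real.exp (-(g z + ‖z - (x k - t k • gradient f (x k))‖ ^ 2 / (2 * t k)) / δ k)))
    (hint2 : ∀ k : ℕ, Integrable (fun z : EuclideanSpace ℝ (Fin n) =>
      Real.exp (-(g z + ‖z - (x k - t k • gradient f (x k))‖ ^ 2 / (2 * t k)) / δ k) • z))
    (hx : ∀ k : ℕ, x (k + 1) =
      (∫ z : EuclideanSpace ℝ (Fin n),
          Real.exp (-(g z + ‖z - (x k - t k • gradient f (x k))‖ ^ 2 / (2 * t k)) / δ k))⁻¹ •
        ∫ z : EuclideanSpace ℝ (Fin n),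
          Real.exp (-(g z + ‖z - (x k - t k • gradient f (x k))‖ ^ 2 / (2 * t k)) / δ k) • z) :
    ∃ xstar : EuclideanSpace ℝ (Fin n),
      (∀ z, f xstar + g xstar ≤ f z + g z) ∧ Tendsto x atTop (𝓝 xstar) := by
  classical
  have hgc : Continuous g := by
    rw [← continuousOn_univ]
    exact hgconv.continuousOn isOpen_univ
  have hfc : Continuous f := hfdiff.continuous
  set F : EuclideanSpace ℝ (Fin n) → ℝ := fun z => f z + g z with hFdef
  have hFc : Continuous F := hfc.add hgc
  have hex : ∀ k : ℕ, ∃ p : EuclideanSpace ℝ (Fin n),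
      (∀ z, g p + ‖p - (x k - t k • gradient f (x k))‖ ^ 2 / (2 * t k)
          + ‖z - p‖ ^ 2 / (2 * t k)
        ≤ g z + ‖z - (x k - t k • gradient f (x k))‖ ^ 2 / (2 * t k)) ∧
      ‖x (k+1) - p‖ ≤ Real.sqrt (2 * n * t k * δ k) := by
    intro k
    obtain ⟨p, hp⟩ := exists_prox g hgconv hgc (htpos k) (x k - t k • gradient f (x k))
    refine ⟨p, hp, ?_⟩
    rw [hx k]
    exact hj_err g hgconv hgc (htpos k) (hδpos k) _ p hp (hint1 k) (hint2 k)
  choose P hP herr using hex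
  set ε : ℕ → ℝ := fun k => Real.sqrt 2 * Real.sqrt (n * t k * δ k) with hεdef
  have hεnn : ∀ k, 0 ≤ ε k := fun k => by positivity
  have herr' : ∀ k, ‖x (k+1) - P k‖ ≤ ε k := by
    intro k
    refine le_trans (herr k) (le_of_eq ?_)
    rw [hεdef]
    dsimp only
    rw [← Real.sqrt_mul (by norm_num : (0:ℝ) ≤ 2)]
    congr 1
    ring
  have hεsum : Summable ε := hsum.mul_left _
  set Sε : ℝ := ∑' j, ε j with hSdef
  have hεtot : ∀ k, ε k ≤ Sε := fun k => Summable.le_tsum hεsum k fun j _ => hεnn j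
  have hS0 : (0:ℝ) ≤ Sε := tsum_nonneg hεnn
  have hstep : ∀ k (u : EuclideanSpace ℝ (Fin n)),
      F (P k) ≤ F u + (‖x k - u‖ ^ 2 - ‖P k - u‖ ^ 2) / (2 * t k) :=
    fun k u => onestep f g hfconv hfdiff L hLpos hLip (htpos k) (htle k) (x k) u (P k) (hP k)
  have hcontr : ∀ (m : EuclideanSpace ℝ (Fin n)), (∀ z, F m ≤ F z) →
      ∀ k, ‖P k - m‖ ≤ ‖x k - m‖ := by
    intro m hm k
    have h1 := hstep k m
    have h2 := hm (P k)
    have h2t : (0:ℝ) < 2 * t k := by linarith [htpos k]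
    have h4 : ‖P k - m‖ ^ 2 ≤ ‖x k - m‖ ^ 2 := by
      have h3 := le_trans h2 h1
      have h3' : (0:ℝ) ≤ (‖x k - m‖ ^ 2 - ‖P k - m‖ ^ 2) / (2 * t k) :=
        (le_add_iff_nonneg_right _).1 h3
      rw [le_div_iff₀ h2t, zero_mul] at h3'
      linarith
    nlinarith [norm_nonneg (P k - m), norm_nonneg (x k - m)]
  have hminu : ∀ z, F ustar ≤ F z := hustar
  have hdec : ∀ (m : EuclideanSpace ℝ (Fin n)), (∀ z, F m ≤ F z) →
      ∀ k, ‖x (k+1) - m‖ ≤ ‖x k - m‖ + ε k := by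
    intro m hm k
    calc ‖x (k+1) - m‖ ≤ ‖x (k+1) - P k‖ + ‖P k - m‖ := by
          simpa [dist_eq_norm] using dist_triangle (x (k+1)) (P k) m
      _ ≤ ε k + ‖x k - m‖ := add_le_add (herr' k) (hcontr m hm k)
      _ = ‖x k - m‖ + ε k := by ring
  set a : ℕ → ℝ := fun k => ‖x k - ustar‖ with hadef
  have ha' : ∀ k, a k ≤ a 0 + ∑ j ∈ Finset.range k, ε j := by
    intro k
    induction k with
    | zero => simp
    | succ k ih =>
      have h1 := hdec ustar hminu k
      rw [Finset.sum_range_succ]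
      have h2 : a (k+1) ≤ a k + ε k := h1
      linarith
  have hpart : ∀ k, (∑ j ∈ Finset.range k, ε j) ≤ Sε := fun k =>
    Summable.sum_le_tsum (Finset.range k) (fun j _ => hεnn j) hεsum
  have haR : ∀ k, a k ≤ a 0 + Sε := fun k => le_trans (ha' k) (by linarith [hpart k])
  set R : ℝ := a 0 + Sε with hRdef
  have hR0 : 0 ≤ R := by
    have : (0:ℝ) ≤ a 0 := norm_nonneg _
    simp only [hRdef]; linarith
  have hPR : ∀ k, ‖P k - ustar‖ ≤ R := fun k => le_trans (hcontr ustar hminu k) (haR k)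
  set dk : ℕ → ℝ := fun k => F (P k) - F ustar with hdkdef
  have hdk0 : ∀ k, 0 ≤ dk k := by
    intro k
    simp only [hdkdef]
    have := hminu (P k)
    linarith
  set C : ℝ := 2 * R + Sε with hCdef
  have hC0 : 0 ≤ C := by simp only [hCdef]; linarith
  have hkey : ∀ k, a (k+1) ^ 2 ≤ a k ^ 2 - 2 * t k * dk k + C * ε k := by
    intro k
    have h2t : (0:ℝ) < 2 * t k := by linarith [htpos k]
    have h1 : a (k+1) ≤ ‖P k - ustar‖ + ε k := by
      calc a (k+1) ≤ ‖x (k+1) - P k‖ + ‖P k - ustar‖ := by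
            simpa [dist_eq_norm] using dist_triangle (x (k+1)) (P k) ustar
        _ ≤ ‖P k - ustar‖ + ε k := by linarith [herr' k]
    have h2 : ‖P k - ustar‖ ^ 2 ≤ a k ^ 2 - 2 * t k * dk k := by
      have hs := hstep k ustar
      have h3 : dk k ≤ (‖x k - ustar‖ ^ 2 - ‖P k - ustar‖ ^ 2) / (2 * t k) := by
        simp only [hdkdef]; linarith
      rw [le_div_iff₀ h2t] at h3
      simp only [hadef]
      nlinarith [h3]
    have h3 : a (k+1) ^ 2 ≤ (‖P k - ustar‖ + ε k) ^ 2 := by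
      have h0 : 0 ≤ a (k+1) := norm_nonneg _
      nlinarith [h1]
    have h5 : ε k * (2 * ‖P k - ustar‖ + ε k) ≤ ε k * C := by
      apply mul_le_mul_of_nonneg_left _ (hεnn k)
      simp only [hCdef]
      linarith [hPR k, hεtot k]
    nlinarith [h2, h3, h5]
  have hsum2 : Summable (fun k => 2 * t k * dk k) := by
    apply summable_of_sum_range_le (c := a 0 ^ 2 + C * Sε)
    · intro k
      have h1 := htpos k
      have h2 := hdk0 k
      positivity
    · intro K
      have htel : a K ^ 2 + ∑ k ∈ Finset.range K, (2 * t k * dk k)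
          ≤ a 0 ^ 2 + C * ∑ k ∈ Finset.range K, ε k := by
        induction K with
        | zero => simp
        | succ K ih =>
          rw [Finset.sum_range_succ, Finset.sum_range_succ]
          have := hkey K
          linarith
      have h7 : C * ∑ k ∈ Finset.range K, ε k ≤ C * Sε :=
        mul_le_mul_of_nonneg_left (hpart K) hC0
      nlinarith [sq_nonneg (a K), htel]
  have hfreq : ∀ m : ℕ, ∃ᶠ k in atTop, dk k < 1 / (m + 1) := by
    intro m
    by_contra hcon
    rw [Filter.not_frequently] at hcon
    have hcon' : ∀ᶠ k in atTop, 1 / ((m:ℝ) + 1) ≤ dk k := hcon.mono fun k hk => not_lt.1 hk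
    obtain ⟨N, hN⟩ := eventually_atTop.1 hcon'
    apply htdiv
    have hsum3 : Summable (fun k => 2 * t (k + N) * dk (k + N)) :=
      (summable_nat_add_iff N).2 hsum2
    have hsum4 : Summable (fun k => ((m:ℝ) + 1) / 2 * (2 * t (k + N) * dk (k + N))) :=
      hsum3.mul_left _
    have hcomp : Summable (fun k => t (k + N)) := by
      refine Summable.of_nonneg_of_le (fun k => (htpos _).le) (fun k => ?_) hsum4
      have h1 := hN (k + N) (Nat.le_add_left N k)
      have h2 := htpos (k + N)
      have h3 : (0:ℝ) < (m:ℝ) + 1 := by positivity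
      have h4 : 1 ≤ ((m:ℝ) + 1) * dk (k + N) := by
        rw [div_le_iff₀ h3] at h1
        linarith
      have h5 := mul_le_mul_of_nonneg_left h4 h2.le
      rw [mul_one] at h5
      have h6 : ((m:ℝ) + 1) / 2 * (2 * t (k + N) * dk (k + N))
          = t (k + N) * (((m:ℝ) + 1) * dk (k + N)) := by ring
      rw [h6]
      exact h5
    exact (summable_nat_add_iff N).1 hcomp
  obtain ⟨φ, hφmono, hφ⟩ := Filter.extraction_forall_of_frequently hfreq
  have hdtend : Tendsto (fun m => dk (φ m)) atTop (𝓝 0) := by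
    apply squeeze_zero (fun m => hdk0 _) (fun m => (hφ m).le)
    exact tendsto_one_div_add_atTop_nhds_zero_nat
  have hball : ∀ m, P (φ m) ∈ Metric.closedBall ustar R := by
    intro m
    rw [Metric.mem_closedBall, dist_eq_norm]
    exact hPR (φ m)
  obtain ⟨xbar, _, ψ, hψmono, hψtend⟩ :=
    tendsto_subseq_of_bounded Metric.isBounded_closedBall hball
  have hFtend : Tendsto (fun m => F (P (φ (ψ m)))) atTop (𝓝 (F xbar)) :=
    (hFc.tendsto xbar).comp hψtend
  have hFtend2 : Tendsto (fun m => F (P (φ (ψ m)))) atTop (𝓝 (F ustar)) := by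
    have h1 : Tendsto (fun m => dk (φ (ψ m))) atTop (𝓝 0) :=
      hdtend.comp hψmono.tendsto_atTop
    have h2 : (fun m => F (P (φ (ψ m)))) = fun m => dk (φ (ψ m)) + F ustar := by
      funext m
      simp [hdkdef]
    rw [h2]
    simpa using h1.add tendsto_const_nhds
  have hFxbar : F xbar = F ustar := tendsto_nhds_unique hFtend hFtend2
  have hxbarmin : ∀ z, F xbar ≤ F z := by
    rw [hFxbar]
    exact hminu
  set b : ℕ → ℝ := fun k => ‖x k - xbar‖ with hbdef
  have hb : ∀ k, b (k+1) ≤ b k + ε k := hdec xbar hxbarmin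
  set T : ℕ → ℝ := fun k => ∑' j, ε (j + k) with hTdef
  have hTsummable : ∀ k, Summable (fun j => ε (j + k)) := fun k =>
    (summable_nat_add_iff k).2 hεsum
  have hTrec : ∀ k, T k = ε k + T (k+1) := by
    intro k
    simp only [hTdef]
    rw [Summable.tsum_eq_zero_add (hTsummable k)]
    simp only [zero_add]
    congr 1
    apply tsum_congr
    intro j
    congr 1
    omega
  have hTnn : ∀ k, 0 ≤ T k := fun k => tsum_nonneg fun j => hεnn _
  have hTtend : Tendsto T atTop (𝓝 0) := by
    have h1 : T = fun k => Sε - ∑ j ∈ Finset.range k, ε j := by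
      funext k
      have h2 := Summable.sum_add_tsum_nat_add (f := ε) k hεsum
      simp only [hTdef, hSdef]
      linarith
    rw [h1]
    simpa [hSdef] using (tendsto_const_nhds (x := Sε)).sub hεsum.hasSum.tendsto_sum_nat
  set cseq : ℕ → ℝ := fun k => b k + T k with hcdef
  have hcmono : ∀ k, cseq (k+1) ≤ cseq k := by
    intro k
    have h1 := hb k
    have h2 := hTrec k
    simp only [hcdef]
    linarith
  have hcconv : Tendsto cseq atTop (𝓝 (⨅ k, cseq k)) := by
    refine tendsto_atTop_ciInf (antitone_nat_of_succ_le hcmono) ⟨0, fun y hy => ?_⟩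
    obtain ⟨k, rfl⟩ := hy
    exact add_nonneg (norm_nonneg _) (hTnn k)
  have hbtend : Tendsto b atTop (𝓝 (⨅ k, cseq k)) := by
    have h1 : b = fun k => cseq k - T k := by
      funext k
      simp [hcdef]
    rw [h1]
    simpa using hcconv.sub hTtend
  have hsubseq : Tendsto (fun m => b (φ (ψ m) + 1)) atTop (𝓝 0) := by
    have h1 : ∀ m, b (φ (ψ m) + 1) ≤ ε (φ (ψ m)) + ‖P (φ (ψ m)) - xbar‖ := by
      intro m
      calc b (φ (ψ m) + 1) ≤ ‖x (φ (ψ m) + 1) - P (φ (ψ m))‖ + ‖P (φ (ψ m)) - xbar‖ := by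
            simpa [dist_eq_norm] using dist_triangle (x (φ (ψ m) + 1)) (P (φ (ψ m))) xbar
        _ ≤ ε (φ (ψ m)) + ‖P (φ (ψ m)) - xbar‖ := by linarith [herr' (φ (ψ m))]
    have h2 : Tendsto (fun m => ε (φ (ψ m))) atTop (𝓝 0) :=
      hεsum.tendsto_atTop_zero.comp (hφmono.comp hψmono).tendsto_atTop
    have h3 : Tendsto (fun m => ‖P (φ (ψ m)) - xbar‖) atTop (𝓝 0) := by
      simpa using (hψtend.sub (tendsto_const_nhds (x := xbar))).norm
    apply squeeze_zero (fun m => norm_nonneg _) h1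
    simpa using h2.add h3
  have hmono2 : StrictMono (fun m => φ (ψ m) + 1) := fun i j hij => by
    have h6 := (hφmono.comp hψmono) hij
    simp only [Function.comp_apply] at h6
    show φ (ψ i) + 1 < φ (ψ j) + 1
    omega
  have hinf0 : (⨅ k, cseq k) = 0 :=
    tendsto_nhds_unique (hbtend.comp hmono2.tendsto_atTop) hsubseq
  rw [hinf0] at hbtend
  refine ⟨xbar, fun z => hxbarmin z, ?_⟩
  rw [tendsto_iff_dist_tendsto_zero]
  simpa [dist_eq_norm] using hbtend
end
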